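/- arXiv:2406.19715 — 3 statements merged into one kernel-verified Lean document; each statement's English description precedes it below -/
import Mathlib

section
/- For every integer n ≥ 1, the number of (1,2)-basis data of length n equals 2^(n−1) · n!. -/
/-- A (1,2)-basis datum of length `n`: sequences `α β γ : {1,…,n} → ℕ` (encoded as
functions `ℕ → ℕ` vanishing outside `{1,…,n}`) with `β i, γ i ∈ {0,1}` and
`α i + 1 ≤ ∑_{j=1}^{i} (1 - β j - γ j)` (in `ℤ`) for all `i ∈ {1,…,n}`. -/
def IsDatum (n : ℕ) (α β γ : ℕ → ℕ) : Prop :=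
  (∀ i, i ∉ Finset.Icc 1 n → α i = 0 ∧ β i = 0 ∧ γ i = 0) ∧
  (∀ i ∈ Finset.Icc 1 n, β i ≤ 1 ∧ γ i ≤ 1) ∧
  (∀ i ∈ Finset.Icc 1 n,
    (α i : ℤ) + 1 ≤ ∑ j ∈ Finset.Icc 1 i, (1 - (β j : ℤ) - (γ j : ℤ)))



open Finset

/-- weight of a step -/
def wt (s : ℕ × ℕ × ℕ) : ℤ := 1 - (s.2.1 : ℤ) - (s.2.2 : ℤ)

/-- height of a (reversed) path -/
def Hgt (l : List (ℕ × ℕ × ℕ)) : ℤ := (l.map wt).sum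

def Valid : List (ℕ × ℕ × ℕ) → Prop
  | [] => True
  | s :: l => s.2.1 ≤ 1 ∧ s.2.2 ≤ 1 ∧ (s.1 : ℤ) + 1 ≤ Hgt (s :: l) ∧ Valid l

def D : ℕ → ℕ → Finset (List (ℕ × ℕ × ℕ))
  | 0, k => if k = 0 then {([] : List (ℕ × ℕ × ℕ))} else ∅
  | n+1, k => ((Finset.range k) ×ˢ (Finset.range 2 ×ˢ Finset.range 2)).biUnion
      fun s => (D n (k + s.2.1 + s.2.2 - 1)).image (fun l => s :: l)

lemma hgt_nil : Hgt [] = 0 := rfl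
lemma hgt_cons (s : ℕ × ℕ × ℕ) (l : List (ℕ × ℕ × ℕ)) :
    Hgt (s :: l) = wt s + Hgt l := by simp [Hgt]

lemma mem_D : ∀ (n k : ℕ) (l : List (ℕ × ℕ × ℕ)),
    l ∈ D n k ↔ l.length = n ∧ Hgt l = (k : ℤ) ∧ Valid l := by
  intro n
  induction n with
  | zero =>
    intro k l
    constructor
    · intro h
      simp only [D] at h
      split at h
      · simp_all [Finset.mem_singleton]
        subst h; simp [Hgt, Valid]
      · simp at h
    · rintro ⟨h1, h2, h3⟩
      rw [List.length_eq_zero_iff] at h1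
      subst h1
      simp [Hgt] at h2
      have : k = 0 := by exact_mod_cast h2.symm
      simp [D, this]
  | succ n ih =>
    intro k l
    simp only [D, Finset.mem_biUnion, Finset.mem_image, Finset.mem_product,
      Finset.mem_range]
    constructor
    · rintro ⟨⟨a, b, c⟩, ⟨ha, hb, hc⟩, l', hl', rfl⟩
      rw [ih] at hl'
      obtain ⟨hlen, hhgt, hval⟩ := hl'
      have hk1 : 1 ≤ k := Nat.pos_of_ne_zero (by rintro rfl; omega)
      have hcast : ((k + b + c - 1 : ℕ) : ℤ) = (k : ℤ) + b + c - 1 := by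
        push_cast [Nat.cast_sub (by omega : 1 ≤ k + b + c)]; ring
      have hh : Hgt ((a, b, c) :: l') = (k : ℤ) := by
        rw [hgt_cons, hhgt, hcast, wt]; ring
      refine ⟨by simp [hlen], hh, ?_⟩
      exact ⟨by omega, by omega, by rw [hh]; exact_mod_cast by omega, hval⟩
    · rintro ⟨hlen, hhgt, hval⟩
      match l with
      | (a, b, c) :: l' =>
        obtain ⟨hb, hc, hhead, hval'⟩ := hval
        rw [hhgt] at hhead
        have ha : a < k := by exact_mod_cast by omega
        have hk1 : 1 ≤ k := by omega
        refine ⟨(a, b, c), ⟨ha, by omega, by omega⟩, l', ?_, rfl⟩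
        rw [ih]
        refine ⟨by simpa using hlen, ?_, hval'⟩
        have : Hgt l' = (k : ℤ) - wt (a, b, c) := by
          rw [← hhgt, hgt_cons]; ring
        rw [this, wt]
        push_cast [Nat.cast_sub (by omega : 1 ≤ k + b + c)]
        ring

lemma card_D_zero (n : ℕ) (hn : 1 ≤ n) : (D n 0).card = 0 := by
  match n, hn with
  | n+1, _ => simp [D]

lemma card_D_succ (n k : ℕ) :
    (D (n+1) k).card
      = k * ((D n (k-1)).card + 2 * (D n k).card + (D n (k+1)).card) := by
  rw [D, Finset.card_biUnion]
  · rw [Finset.sum_product]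
    have : ∀ a ∈ Finset.range k,
        (∑ s ∈ Finset.range 2 ×ˢ Finset.range 2,
          ((D n (k + s.1 + s.2 - 1)).image (fun l => (a, s.1, s.2) :: l)).card)
        = (D n (k-1)).card + 2 * (D n k).card + (D n (k+1)).card := by
      intro a ha
      rw [Finset.sum_product]
      have himg : ∀ (m : ℕ) (s : ℕ × ℕ × ℕ),
          ((D n m).image (fun l => s :: l)).card = (D n m).card := by
        intro m s
        exact Finset.card_image_of_injective _ (fun x y h => by simpa using h)
      simp only [Finset.sum_range_succ, Finset.sum_range_zero, himg]
      rw [show k + 0 + 0 - 1 = k - 1 from by omega,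
        show k + 0 + 1 - 1 = k from by omega,
        show k + 1 + 1 - 1 = k + 1 from by omega]
      ring
    rw [Finset.sum_congr rfl this, Finset.sum_const, Finset.card_range,
      smul_eq_mul]
  · intro s hs s' hs' hne
    simp only [Finset.disjoint_left, Finset.mem_image]
    rintro x ⟨l, _, rfl⟩ ⟨l', _, h⟩
    exact hne (by simpa using (List.cons_eq_cons.mp h).1.symm)

lemma card_D (n : ℕ) (hn : 1 ≤ n) (k : ℕ) (hk : 1 ≤ k) :
    (D n k).card = n.factorial * (n-1).choose (k-1) := by
  induction n generalizing k with
  | zero => omega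
  | succ n ih =>
    rw [card_D_succ]
    rcases Nat.eq_zero_or_pos n with hn0 | hn1
    · subst hn0
      have d : ∀ m : ℕ, (D 0 m).card = if m = 0 then 1 else 0 := by
        intro m; rw [D]; split <;> simp
      rcases eq_or_lt_of_le hk with hk1 | hk2
      · rw [← hk1]; simp [d]
      · rw [d, d, d]
        simp only [if_neg (by omega : ¬ k - 1 = 0), if_neg (by omega : ¬ k = 0),
          if_neg (by omega : ¬ k + 1 = 0)]
        simp [Nat.choose_eq_zero_of_lt (by omega : 0 < k - 1)]
    · rcases eq_or_lt_of_le hk with hk1 | hk2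
      · rw [← hk1]
        rw [show (1:ℕ) - 1 = 0 from rfl, card_D_zero n hn1,
          ih hn1 1 le_rfl, ih hn1 (1+1) (by omega)]
        obtain ⟨m, rfl⟩ : ∃ m, n = m + 1 := ⟨n-1, by omega⟩
        simp [Nat.choose_one_right, Nat.factorial_succ]
        ring
      · have h2 : 2 ≤ k := hk2
        rw [ih hn1 (k-1) (by omega), ih hn1 k hk, ih hn1 (k+1) (by omega)]
        obtain ⟨m, rfl⟩ : ∃ m, n = m + 1 := ⟨n-1, by omega⟩
        obtain ⟨j, rfl⟩ : ∃ j, k = j + 2 := ⟨k-2, by omega⟩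
        have e1 : j + 2 - 1 - 1 = j := by omega
        have e2 : j + 2 - 1 = j + 1 := by omega
        have e3 : j + 2 + 1 - 1 = j + 2 := by omega
        have e4 : m + 1 - 1 = m := by omega
        have e5 : m + 1 + 1 - 1 = m + 1 := by omega
        rw [e1, e2, e3, e4, e5]
        have key : (j+2) * (m.choose j + 2 * m.choose (j+1) + m.choose (j+2))
            = (m+2) * ((m+1).choose (j+1)) := by
          have p1 : (m+2).choose (j+2)
              = (m+1).choose (j+1) + (m+1).choose (j+2) := Nat.choose_succ_succ _ _
          have p2 : (m+1).choose (j+1) = m.choose j + m.choose (j+1) :=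
            Nat.choose_succ_succ _ _
          have p3 : (m+1).choose (j+2) = m.choose (j+1) + m.choose (j+2) :=
            Nat.choose_succ_succ _ _
          have p4 : (m+2) * (m+1).choose (j+1) = (m+2).choose (j+2) * (j+2) :=
            Nat.add_one_mul_choose_eq (m+1) (j+1)
          have inner : m.choose j + 2 * m.choose (j+1) + m.choose (j+2)
              = (m+2).choose (j+2) := by
            have := p1; have := p2; have := p3; omega
          rw [inner, mul_comm]; exact p4.symm
        calc (j+2) * ((m+1).factorial * m.choose j
              + 2 * ((m+1).factorial * m.choose (j+1))
              + (m+1).factorial * m.choose (j+2))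
            = (m+1).factorial
              * ((j+2) * (m.choose j + 2 * m.choose (j+1) + m.choose (j+2))) := by ring
          _ = (m+1).factorial * ((m+2) * ((m+1).choose (j+1))) := by rw [key]
          _ = (m+1+1).factorial * (m+1).choose (j+1) := by
              rw [show (m+1+1).factorial = (m+2) * (m+1).factorial from
                Nat.factorial_succ (m+1)]; ring

def Dtot (n : ℕ) : Finset (List (ℕ × ℕ × ℕ)) := (Finset.Icc 1 n).biUnion (D n)

lemma card_Dtot (n : ℕ) (hn : 1 ≤ n) : (Dtot n).card = 2 ^ (n-1) * n.factorial := by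
  rw [Dtot, Finset.card_biUnion]
  · have : ∀ k ∈ Finset.Icc 1 n, (D n k).card = n.factorial * (n-1).choose (k-1) := by
      intro k hk
      exact card_D n hn k (Finset.mem_Icc.mp hk).1
    rw [Finset.sum_congr rfl this,
      show (Finset.Icc 1 n) = Finset.image (· + 1) (Finset.range n) by
        ext x
        simp only [Finset.mem_Icc, Finset.mem_image, Finset.mem_range]
        constructor
        · rintro ⟨h1, h2⟩; exact ⟨x - 1, by omega, by omega⟩
        · rintro ⟨a, ha, rfl⟩; omega,
      Finset.sum_image (by intro x _ y _ h; exact Nat.add_right_cancel h)]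
    have : ∀ j ∈ Finset.range n,
        n.factorial * (n-1).choose (j + 1 - 1) = n.factorial * (n-1).choose j := by
      intro j _; congr 2
    rw [Finset.sum_congr rfl this, ← Finset.mul_sum]
    rw [show n = (n-1) + 1 from by omega]
    rw [Nat.succ_sub_one, Nat.sum_range_choose]
    ring
  · intro k hk k' hk' hne
    simp only [Finset.disjoint_left]
    intro l hl hl'
    rw [mem_D] at hl hl'
    exact hne (by exact_mod_cast hl.2.1.symm.trans hl'.2.1)

lemma mem_Dtot (n : ℕ) (l : List (ℕ × ℕ × ℕ)) :
    l ∈ Dtot n ↔ ∃ k, 1 ≤ k ∧ k ≤ n ∧ l ∈ D n k := by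
  simp [Dtot, Finset.mem_biUnion, Finset.mem_Icc, and_assoc]

/-- the list of steps of a datum, in reverse order (last step first) -/
def Psi : ℕ → ((ℕ → ℕ) × (ℕ → ℕ) × (ℕ → ℕ)) → List (ℕ × ℕ × ℕ)
  | 0, _ => []
  | n+1, t => (t.1 (n+1), t.2.1 (n+1), t.2.2 (n+1)) :: Psi n t

lemma psi_length (n : ℕ) (t : (ℕ → ℕ) × (ℕ → ℕ) × (ℕ → ℕ)) :
    (Psi n t).length = n := by
  induction n with
  | zero => rfl
  | succ n ih => simp [Psi, ih]

lemma hgt_psi (n : ℕ) (t : (ℕ → ℕ) × (ℕ → ℕ) × (ℕ → ℕ)) :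
    Hgt (Psi n t) = ∑ j ∈ Finset.Icc 1 n, (1 - (t.2.1 j : ℤ) - (t.2.2 j : ℤ)) := by
  induction n with
  | zero => simp [Psi, Hgt]
  | succ n ih =>
    rw [Psi, hgt_cons, ih, Finset.sum_Icc_succ_top (by omega : 1 ≤ n + 1), wt]
    ring

lemma psi_congr (n : ℕ) (t t' : (ℕ → ℕ) × (ℕ → ℕ) × (ℕ → ℕ))
    (h : ∀ i, 1 ≤ i → i ≤ n → t.1 i = t'.1 i ∧ t.2.1 i = t'.2.1 i ∧ t.2.2 i = t'.2.2 i) :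
    Psi n t = Psi n t' := by
  induction n with
  | zero => rfl
  | succ n ih =>
    obtain ⟨h1, h2, h3⟩ := h (n+1) (by omega) le_rfl
    rw [Psi, Psi, h1, h2, h3, ih (fun i hi hi' => h i hi (by omega))]

lemma psi_inj_comp (n : ℕ) (t t' : (ℕ → ℕ) × (ℕ → ℕ) × (ℕ → ℕ))
    (h : Psi n t = Psi n t') :
    ∀ i, 1 ≤ i → i ≤ n → t.1 i = t'.1 i ∧ t.2.1 i = t'.2.1 i ∧ t.2.2 i = t'.2.2 i := by
  induction n with
  | zero => intro i h1 h2; omega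
  | succ n ih =>
    rw [Psi, Psi, List.cons_eq_cons] at h
    obtain ⟨hhd, htl⟩ := h
    intro i h1 h2
    rcases Nat.lt_or_ge i (n+1) with hi | hi
    · exact ih htl i h1 (by omega)
    · have : i = n + 1 := by omega
      subst this
      exact ⟨by simpa using congrArg Prod.fst hhd,
        by simpa using congrArg (fun p => p.2.1) hhd,
        by simpa using congrArg (fun p => p.2.2) hhd⟩

lemma valid_psi (n : ℕ) (t : (ℕ → ℕ) × (ℕ → ℕ) × (ℕ → ℕ))
    (h2 : ∀ i ∈ Finset.Icc 1 n, t.2.1 i ≤ 1 ∧ t.2.2 i ≤ 1)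
    (h3 : ∀ i ∈ Finset.Icc 1 n,
      (t.1 i : ℤ) + 1 ≤ ∑ j ∈ Finset.Icc 1 i, (1 - (t.2.1 j : ℤ) - (t.2.2 j : ℤ))) :
    Valid (Psi n t) := by
  induction n with
  | zero => trivial
  | succ n ih =>
    rw [Psi]
    refine ⟨(h2 (n+1) (by simp)).1, (h2 (n+1) (by simp)).2, ?_, ?_⟩
    · rw [show ((t.1 (n+1), t.2.1 (n+1), t.2.2 (n+1)) : ℕ × ℕ × ℕ).1 = t.1 (n+1) from rfl]
      rw [← Psi, hgt_psi]
      exact h3 (n+1) (by simp)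
    · exact ih (fun i hi => h2 i (by simp at hi ⊢; omega))
        (fun i hi => h3 i (by simp at hi ⊢; omega))

/-- reconstruct a datum from a list -/
def Phi (n : ℕ) (l : List (ℕ × ℕ × ℕ)) : (ℕ → ℕ) × (ℕ → ℕ) × (ℕ → ℕ) :=
  (fun i => if 1 ≤ i ∧ i ≤ n then (l.getD (n-i) (0,0,0)).1 else 0,
   fun i => if 1 ≤ i ∧ i ≤ n then (l.getD (n-i) (0,0,0)).2.1 else 0,
   fun i => if 1 ≤ i ∧ i ≤ n then (l.getD (n-i) (0,0,0)).2.2 else 0)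

lemma psi_phi_drop (n : ℕ) (l : List (ℕ × ℕ × ℕ)) (hl : l.length = n) :
    ∀ i, i ≤ n → Psi i (Phi n l) = l.drop (n - i) := by
  intro i
  induction i with
  | zero =>
    intro _
    rw [Psi, Nat.sub_zero, ← hl, List.drop_length]
  | succ i ih =>
    intro hi
    have hlt : n - (i+1) < l.length := by omega
    rw [Psi, ih (by omega), List.drop_eq_getElem_cons hlt]
    have e : n - (i+1) + 1 = n - i := by omega
    rw [e]
    congr 1
    have : (Phi n l).1 (i+1) = (l.getD (n-(i+1)) (0,0,0)).1 := by
      simp [Phi, show 1 ≤ i + 1 ∧ i + 1 ≤ n from ⟨by omega, hi⟩]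
    have h2 : (Phi n l).2.1 (i+1) = (l.getD (n-(i+1)) (0,0,0)).2.1 := by
      simp [Phi, show 1 ≤ i + 1 ∧ i + 1 ≤ n from ⟨by omega, hi⟩]
    have h3 : (Phi n l).2.2 (i+1) = (l.getD (n-(i+1)) (0,0,0)).2.2 := by
      simp [Phi, show 1 ≤ i + 1 ∧ i + 1 ≤ n from ⟨by omega, hi⟩]
    rw [this, h2, h3, List.getD_eq_getElem l _ hlt]

lemma valid_drop (l : List (ℕ × ℕ × ℕ)) (h : Valid l) : ∀ j, Valid (l.drop j) := by
  induction l with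
  | nil => intro j; rw [List.drop_nil]; exact h
  | cons s l ih =>
    intro j
    cases j with
    | zero => exact h
    | succ j => exact ih h.2.2.2 j

lemma hgt_le_length (l : List (ℕ × ℕ × ℕ)) : Hgt l ≤ l.length := by
  induction l with
  | nil => simp [Hgt]
  | cons s l ih =>
    rw [hgt_cons, List.length_cons]
    have hw : wt s ≤ 1 := by unfold wt; omega
    push_cast
    linarith

lemma valid_hgt_pos (l : List (ℕ × ℕ × ℕ)) (h : Valid l) (hne : l ≠ []) :
    1 ≤ Hgt l := by
  match l with
  | s :: l' =>
    have h1 := h.2.2.1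
    have h0 : (0:ℤ) ≤ (s.1 : ℤ) := Int.natCast_nonneg _
    linarith

lemma psi_mem_Dtot (n : ℕ) (hn : 1 ≤ n) (t : (ℕ → ℕ) × (ℕ → ℕ) × (ℕ → ℕ))
    (ht : IsDatum n t.1 t.2.1 t.2.2) : Psi n t ∈ Dtot n := by
  obtain ⟨h1, h2, h3⟩ := ht
  have hval : Valid (Psi n t) := valid_psi n t h2 h3
  have hne : Psi n t ≠ [] := by
    intro h
    have := psi_length n t
    rw [h] at this
    simp at this
    omega
  have hpos : 1 ≤ Hgt (Psi n t) := valid_hgt_pos _ hval hne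
  have hle : Hgt (Psi n t) ≤ n := by
    have := hgt_le_length (Psi n t)
    rwa [psi_length] at this
  rw [mem_Dtot]
  refine ⟨(Hgt (Psi n t)).toNat, by omega, by omega, ?_⟩
  rw [mem_D]
  exact ⟨psi_length n t, by rw [Int.toNat_of_nonneg (by omega)], hval⟩

lemma phi_apply (n : ℕ) (l : List (ℕ × ℕ × ℕ)) (i : ℕ) (h1 : 1 ≤ i) (h2 : i ≤ n)
    (hlt : n - i < l.length) :
    (Phi n l).1 i = (l[n-i]'hlt).1 ∧ (Phi n l).2.1 i = (l[n-i]'hlt).2.1 ∧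
      (Phi n l).2.2 i = (l[n-i]'hlt).2.2 := by
  refine ⟨?_, ?_, ?_⟩ <;>
    simp [Phi, h1, h2, List.getD_eq_getElem l _ hlt, List.getElem?_eq_getElem hlt]

lemma phi_datum (n : ℕ) (hn : 1 ≤ n) (l : List (ℕ × ℕ × ℕ)) (hl : l ∈ Dtot n) :
    IsDatum n (Phi n l).1 (Phi n l).2.1 (Phi n l).2.2 ∧ Psi n (Phi n l) = l := by
  rw [mem_Dtot] at hl
  obtain ⟨k, hk1, hkn, hlk⟩ := hl
  rw [mem_D] at hlk
  obtain ⟨hlen, hhgt, hval⟩ := hlk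
  have hpsi : Psi n (Phi n l) = l := by
    have := psi_phi_drop n l hlen n le_rfl
    simpa [Nat.sub_self] using this
  refine ⟨⟨?_, ?_, ?_⟩, hpsi⟩
  · intro i hi
    rw [Finset.mem_Icc] at hi
    refine ⟨if_neg ?_, if_neg ?_, if_neg ?_⟩ <;> omega
  · intro i hi
    rw [Finset.mem_Icc] at hi
    have hlt : n - i < l.length := by omega
    have hdrop : l.drop (n-i) = l[n-i] :: l.drop (n-i+1) :=
      List.drop_eq_getElem_cons hlt
    have hvd : Valid (l.drop (n-i)) := valid_drop l hval _
    rw [hdrop] at hvd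
    obtain ⟨hb, hc, _, _⟩ := hvd
    obtain ⟨e1, e2, e3⟩ := phi_apply n l i hi.1 hi.2 hlt
    rw [e2, e3]
    exact ⟨hb, hc⟩
  · intro i hi
    rw [Finset.mem_Icc] at hi
    have hlt : n - i < l.length := by omega
    have hdrop : l.drop (n-i) = l[n-i] :: l.drop (n-i+1) :=
      List.drop_eq_getElem_cons hlt
    have hvd : Valid (l.drop (n-i)) := valid_drop l hval _
    rw [hdrop] at hvd
    obtain ⟨_, _, hhd, _⟩ := hvd
    rw [← hdrop] at hhd
    obtain ⟨e1, e2, e3⟩ := phi_apply n l i hi.1 hi.2 hlt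
    rw [e1, ← hgt_psi i (Phi n l), psi_phi_drop n l hlen i hi.2]
    exact hhd

/-- The number of (1,2)-basis data of length `n ≥ 1` is `2^(n-1) · n!`. -/
theorem card_datum (n : ℕ) (hn : 1 ≤ n) :
    {t : (ℕ → ℕ) × (ℕ → ℕ) × (ℕ → ℕ) | IsDatum n t.1 t.2.1 t.2.2}.ncard
      = 2 ^ (n - 1) * n.factorial := by
  set S := {t : (ℕ → ℕ) × (ℕ → ℕ) × (ℕ → ℕ) | IsDatum n t.1 t.2.1 t.2.2} with hS
  have hinj : Set.InjOn (Psi n) S := by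
    rintro ⟨a, b, c⟩ ht ⟨a', b', c'⟩ ht' h
    have hcomp := psi_inj_comp n _ _ h
    simp only [hS, Set.mem_setOf_eq] at ht ht'
    have ea : a = a' := by
      funext i
      by_cases hi : 1 ≤ i ∧ i ≤ n
      · exact (hcomp i hi.1 hi.2).1
      · rw [(ht.1 i (by rw [Finset.mem_Icc]; omega)).1,
          (ht'.1 i (by rw [Finset.mem_Icc]; omega)).1]
    have eb : b = b' := by
      funext i
      by_cases hi : 1 ≤ i ∧ i ≤ n
      · exact (hcomp i hi.1 hi.2).2.1
      · rw [(ht.1 i (by rw [Finset.mem_Icc]; omega)).2.1,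
          (ht'.1 i (by rw [Finset.mem_Icc]; omega)).2.1]
    have ec : c = c' := by
      funext i
      by_cases hi : 1 ≤ i ∧ i ≤ n
      · exact (hcomp i hi.1 hi.2).2.2
      · rw [(ht.1 i (by rw [Finset.mem_Icc]; omega)).2.2,
          (ht'.1 i (by rw [Finset.mem_Icc]; omega)).2.2]
    simp [ea, eb, ec]
  have himg : Psi n '' S = ↑(Dtot n) := by
    apply Set.Subset.antisymm
    · rintro _ ⟨t, ht, rfl⟩
      exact psi_mem_Dtot n hn t ht
    · intro l hl
      obtain ⟨hdat, hpsi⟩ := phi_datum n hn l hl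
      exact ⟨Phi n l, hdat, hpsi⟩
  calc S.ncard = (Psi n '' S).ncard := (Set.ncard_image_of_injOn hinj).symm
    _ = (Dtot n).card := by rw [himg, Set.ncard_coe_finset]
    _ = 2 ^ (n - 1) * n.factorial := card_Dtot n hn
end

section
/- For every integer n ≥ 1 and every integer r ≥ 0, the number of (1,2)-basis data (α, β, γ) of length n whose final height h_n = Σ_{j=1}^{n} (1 − β_j − γ_j) equals r + 1 is exactly n! · C(n−1, r), where C denotes the ordinary binomial coefficient (so in particular this count is 0 when r ≥ n). -/
def finalHeight (n : ℕ) (β γ : ℕ → ℕ) : ℤ :=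
  ∑ j ∈ Finset.Icc 1 n, (1 - (β j : ℤ) - (γ j : ℤ))

abbrev T3 := (ℕ → ℕ) × (ℕ → ℕ) × (ℕ → ℕ)

def P (n : ℕ) (h : ℤ) : Set T3 :=
  {t | IsDatum n t.1 t.2.1 t.2.2 ∧ finalHeight n t.2.1 t.2.2 = h}

def upd (f : ℕ → ℕ) (k v : ℕ) : ℕ → ℕ := fun i => if i = k then v else f i

def extMap (n : ℕ) : (ℕ × ℕ × ℕ) × T3 → T3 := fun p =>
  (upd p.2.1 (n+1) p.1.1, upd p.2.2.1 (n+1) p.1.2.1, upd p.2.2.2 (n+1) p.1.2.2)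

def S (n : ℕ) (h : ℤ) : Set ((ℕ × ℕ × ℕ) × T3) :=
  {p | p.1.2.1 ≤ 1 ∧ p.1.2.2 ≤ 1 ∧ (p.1.1 : ℤ) + 1 ≤ h ∧
    p.2 ∈ P n (h - (1 - (p.1.2.1 : ℤ) - (p.1.2.2 : ℤ)))}

lemma ncard_sprod {α β : Type*} (s : Set α) (t : Set β) :
    (s ×ˢ t).ncard = s.ncard * t.ncard := by
  rw [← Nat.card_coe_set_eq, ← Nat.card_coe_set_eq, ← Nat.card_coe_set_eq,
    Nat.card_congr (Equiv.Set.prod s t), Nat.card_prod]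

lemma P_zero (h : ℤ) :
    P 0 h = if h = 0 then
      {(((fun _ => 0) : ℕ → ℕ), ((fun _ => 0) : ℕ → ℕ), ((fun _ => 0) : ℕ → ℕ))}
    else (∅ : Set T3) := by
  have hIcc : (Finset.Icc 1 0 : Finset ℕ) = ∅ := by simp
  ext ⟨a, b, c⟩
  constructor
  · rintro ⟨⟨hv, -, -⟩, hfh⟩
    have h0 : h = 0 := by rw [← hfh]; simp [finalHeight, hIcc]
    simp only [h0, if_pos rfl, Set.mem_singleton_iff]
    have hall : ∀ i, a i = 0 ∧ b i = 0 ∧ c i = 0 := fun i => hv i (by simp [hIcc])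
    refine Prod.ext ?_ (Prod.ext ?_ ?_) <;> funext i <;>
      simp [(hall i).1, (hall i).2.1, (hall i).2.2]
  · intro hmem
    by_cases h0 : h = 0
    · rw [if_pos h0, Set.mem_singleton_iff] at hmem
      subst h0
      rw [hmem]
      exact ⟨⟨fun i _ => ⟨rfl, rfl, rfl⟩, by simp [hIcc], by simp [hIcc]⟩,
        by simp [finalHeight, hIcc]⟩
    · rw [if_neg h0] at hmem
      exact absurd hmem (Set.notMem_empty _)

lemma ncard_P_zero (h : ℤ) : (P 0 h).ncard = if h = 0 then 1 else 0 := by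
  rw [P_zero]; split <;> simp

lemma P_zero_finite (h : ℤ) : (P 0 h).Finite := by
  rw [P_zero]; split <;> simp

lemma P_empty (n : ℕ) (hn : 1 ≤ n) (h : ℤ) (hh : h ≤ 0) : P n h = ∅ := by
  ext ⟨a, b, c⟩
  simp only [P, Set.mem_setOf_eq, Set.mem_empty_iff_false, iff_false, not_and]
  rintro ⟨-, -, hcond⟩ hfh
  have := hcond n (by simp [Finset.mem_Icc]; omega)
  rw [show (∑ j ∈ Finset.Icc 1 n, (1 - (b j : ℤ) - (c j : ℤ))) = finalHeight n b c from rfl,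
    hfh] at this
  omega

lemma sum_upd (b c : ℕ → ℕ) (n vb vc i : ℕ) (hi : i ≤ n) :
    ∑ j ∈ Finset.Icc 1 i, (1 - (upd b (n+1) vb j : ℤ) - (upd c (n+1) vc j : ℤ)) =
    ∑ j ∈ Finset.Icc 1 i, (1 - (b j : ℤ) - (c j : ℤ)) := by
  refine Finset.sum_congr rfl fun j hj => ?_
  simp only [Finset.mem_Icc] at hj
  have hj' : j ≠ n + 1 := by omega
  simp [upd, hj']

lemma finalHeight_succ (n : ℕ) (b c : ℕ → ℕ) :
    finalHeight (n+1) b c = finalHeight n b c + (1 - (b (n+1) : ℤ) - (c (n+1) : ℤ)) := by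
  unfold finalHeight
  rw [Finset.sum_Icc_succ_top (by omega : (1:ℕ) ≤ n+1)]

lemma decomp (n : ℕ) (h : ℤ) : P (n+1) h = extMap n '' S n h := by
  ext ⟨a, b, c⟩
  constructor
  · rintro ⟨⟨hv, hbc, hcond⟩, hfh⟩
    have hmem : n + 1 ∈ Finset.Icc 1 (n+1) := by simp
    refine ⟨((a (n+1), b (n+1), c (n+1)),
      (upd a (n+1) 0, upd b (n+1) 0, upd c (n+1) 0)), ⟨(hbc _ hmem).1, (hbc _ hmem).2, ?_, ?_, ?_⟩, ?_⟩
    · have := hcond _ hmem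
      rwa [show (∑ j ∈ Finset.Icc 1 (n+1), (1 - (b j : ℤ) - (c j : ℤ)))
          = finalHeight (n+1) b c from rfl, hfh] at this
    · -- prefix is a datum
      refine ⟨fun i hi => ?_, fun i hi => ?_, fun i hi => ?_⟩
      · by_cases hieq : i = n + 1
        · simp [upd, hieq]
        · have : i ∉ Finset.Icc 1 (n+1) := by
            simp only [Finset.mem_Icc] at hi ⊢; omega
          have h4 := hv i this
          simp only [upd, if_neg hieq]
          exact h4
      · have hieq : i ≠ n + 1 := by simp only [Finset.mem_Icc] at hi; omega
        have : i ∈ Finset.Icc 1 (n+1) := by simp only [Finset.mem_Icc] at hi ⊢; omega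
        simpa [upd, hieq] using hbc i this
      · have hile : i ≤ n := by simp only [Finset.mem_Icc] at hi; omega
        have hieq : i ≠ n + 1 := by omega
        have : i ∈ Finset.Icc 1 (n+1) := by simp only [Finset.mem_Icc] at hi ⊢; omega
        rw [sum_upd _ _ _ _ _ _ hile]
        simpa [upd, hieq] using hcond i this
    · -- final height of prefix
      show finalHeight n (upd b (n+1) 0) (upd c (n+1) 0)
        = h - (1 - (b (n+1) : ℤ) - (c (n+1) : ℤ))
      have e1 : finalHeight n (upd b (n+1) 0) (upd c (n+1) 0) = finalHeight n b c :=
        sum_upd b c n 0 0 n le_rfl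
      have e2 := finalHeight_succ n b c
      rw [e1]; rw [hfh] at e2; omega
    · -- extension recovers the original
      refine Prod.ext ?_ (Prod.ext ?_ ?_) <;> funext i <;>
        by_cases hieq : i = n + 1 <;> simp [extMap, upd, hieq]
  · rintro ⟨⟨⟨A, B, C⟩, ⟨a', b', c'⟩⟩, ⟨hB, hC, hA, ⟨hv, hbc, hcond⟩, hfh⟩, heq⟩
    rw [← heq]
    replace hB : B ≤ 1 := hB
    replace hC : C ≤ 1 := hC
    replace hA : (A : ℤ) + 1 ≤ h := hA
    replace hfh : finalHeight n b' c' = h - (1 - (B : ℤ) - (C : ℤ)) := hfh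
    show (upd a' (n+1) A, upd b' (n+1) B, upd c' (n+1) C) ∈ P (n+1) h
    have hfh' : finalHeight (n+1) (upd b' (n+1) B) (upd c' (n+1) C) = h := by
      rw [finalHeight_succ]
      have e1 : finalHeight n (upd b' (n+1) B) (upd c' (n+1) C) = finalHeight n b' c' :=
        sum_upd b' c' n B C n le_rfl
      rw [e1, hfh]
      simp [upd]
    refine ⟨⟨fun i hi => ?_, fun i hi => ?_, fun i hi => ?_⟩, hfh'⟩
    · have hieq : i ≠ n + 1 := fun hh => hi (by simp [hh])
      have : i ∉ Finset.Icc 1 n := by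
        simp only [Finset.mem_Icc] at hi ⊢; omega
      have h4 := hv i this
      simp only [upd, if_neg hieq]
      exact h4
    · by_cases hieq : i = n + 1
      · simp [upd, hieq, hB, hC]
      · have : i ∈ Finset.Icc 1 n := by simp only [Finset.mem_Icc] at hi ⊢; omega
        simpa [upd, hieq] using hbc i this
    · by_cases hieq : i = n + 1
      · subst hieq
        rw [show (∑ j ∈ Finset.Icc 1 (n+1),
            (1 - (upd b' (n+1) B j : ℤ) - (upd c' (n+1) C j : ℤ)))
          = finalHeight (n+1) (upd b' (n+1) B) (upd c' (n+1) C) from rfl, hfh']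
        simpa [upd] using hA
      · have hile : i ≤ n := by simp only [Finset.mem_Icc] at hi; omega
        have : i ∈ Finset.Icc 1 n := by simp only [Finset.mem_Icc] at hi ⊢; omega
        rw [sum_upd _ _ _ _ _ _ hile]
        simpa [upd, hieq] using hcond i this

lemma extMap_injOn (n : ℕ) (h : ℤ) : Set.InjOn (extMap n) (S n h) := by
  rintro ⟨⟨A, B, C⟩, ⟨a, b, c⟩⟩ hp ⟨⟨A', B', C'⟩, ⟨a', b', c'⟩⟩ hq heq
  obtain ⟨⟨hpd, -, -⟩, -⟩ := hp.2.2.2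
  obtain ⟨⟨hqd, -, -⟩, -⟩ := hq.2.2.2
  have hnm : n + 1 ∉ Finset.Icc 1 n := by simp
  have hz := hpd _ hnm
  have hz' := hqd _ hnm
  simp only [extMap, Prod.mk.injEq] at heq
  obtain ⟨e1, e2, e3⟩ := heq
  have ea : ∀ i, upd a (n+1) A i = upd a' (n+1) A' i := fun i => congrFun e1 i
  have eb : ∀ i, upd b (n+1) B i = upd b' (n+1) B' i := fun i => congrFun e2 i
  have ec : ∀ i, upd c (n+1) C i = upd c' (n+1) C' i := fun i => congrFun e3 i
  have hA : A = A' := by simpa [upd] using ea (n+1)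
  have hB : B = B' := by simpa [upd] using eb (n+1)
  have hC : C = C' := by simpa [upd] using ec (n+1)
  have ha : a = a' := by
    funext i
    by_cases hieq : i = n + 1
    · rw [hieq]; exact hz.1.trans hz'.1.symm
    · simpa [upd, hieq] using ea i
  have hb : b = b' := by
    funext i
    by_cases hieq : i = n + 1
    · rw [hieq]; exact hz.2.1.trans hz'.2.1.symm
    · simpa [upd, hieq] using eb i
  have hc : c = c' := by
    funext i
    by_cases hieq : i = n + 1
    · rw [hieq]; exact hz.2.2.trans hz'.2.2.symm
    · simpa [upd, hieq] using ec i
  simp [hA, hB, hC, ha, hb, hc]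

def A2 (h : ℤ) (b c : ℕ) : Finset (ℕ × ℕ × ℕ) :=
  (Finset.range h.toNat).image (fun a => (a, b, c))

lemma A2_card (h : ℤ) (b c : ℕ) : (A2 h b c).card = h.toNat := by
  rw [A2, Finset.card_image_of_injective _ (fun x y hxy => by
    simpa using hxy), Finset.card_range]

lemma mem_A2 (h : ℤ) (b c : ℕ) (p : ℕ × ℕ × ℕ) :
    p ∈ A2 h b c ↔ (p.1 : ℤ) + 1 ≤ h ∧ p.2.1 = b ∧ p.2.2 = c := by
  obtain ⟨A, B, C⟩ := p
  simp only [A2, Finset.mem_image, Finset.mem_range, Prod.mk.injEq]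
  constructor
  · rintro ⟨a, ha, rfl, rfl, rfl⟩
    refine ⟨by omega, rfl, rfl⟩
  · rintro ⟨hA, rfl, rfl⟩
    exact ⟨A, by omega, rfl, rfl, rfl⟩

lemma S_eq (n : ℕ) (h : ℤ) :
    S n h = ↑(A2 h 0 0) ×ˢ P n (h-1) ∪ ↑(A2 h 1 0) ×ˢ P n h ∪ ↑(A2 h 0 1) ×ˢ P n h
      ∪ ↑(A2 h 1 1) ×ˢ P n (h+1) := by
  ext ⟨⟨A, B, C⟩, t⟩
  simp only [S, Set.mem_setOf_eq, Set.mem_union, Set.mem_prod, Finset.mem_coe, mem_A2]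
  constructor
  · rintro ⟨hB, hC, hA, ht⟩
    interval_cases B <;> interval_cases C
    · refine Or.inl (Or.inl (Or.inl ⟨⟨hA, rfl, rfl⟩, ?_⟩))
      convert ht using 2 <;> (push_cast; ring)
    · refine Or.inl (Or.inr ⟨⟨hA, rfl, rfl⟩, ?_⟩)
      convert ht using 2 <;> (push_cast; ring)
    · refine Or.inl (Or.inl (Or.inr ⟨⟨hA, rfl, rfl⟩, ?_⟩))
      convert ht using 2 <;> (push_cast; ring)
    · refine Or.inr ⟨⟨hA, rfl, rfl⟩, ?_⟩
      convert ht using 2 <;> (push_cast; ring)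
  · rintro (((⟨⟨hA, rfl, rfl⟩, ht⟩ | ⟨⟨hA, rfl, rfl⟩, ht⟩) | ⟨⟨hA, rfl, rfl⟩, ht⟩)
      | ⟨⟨hA, rfl, rfl⟩, ht⟩) <;>
    refine ⟨by norm_num, by norm_num, hA, ?_⟩ <;>
    · convert ht using 2 <;> (push_cast; ring)

lemma P_finite : ∀ (n : ℕ) (h : ℤ), (P n h).Finite := by
  intro n
  induction n with
  | zero => exact P_zero_finite
  | succ n ih =>
    intro h
    rw [decomp, S_eq]
    exact Set.Finite.image _
      ((((((Finset.finite_toSet _).prod (ih _)).union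
        ((Finset.finite_toSet _).prod (ih _))).union
        ((Finset.finite_toSet _).prod (ih _))).union
        ((Finset.finite_toSet _).prod (ih _))))

lemma A2_prod_disj (h : ℤ) {b c b' c' : ℕ} (hne : (b, c) ≠ (b', c'))
    (X Y : Set T3) :
    Disjoint ((A2 h b c : Set (ℕ × ℕ × ℕ)) ×ˢ X) ((A2 h b' c' : Set (ℕ × ℕ × ℕ)) ×ˢ Y) := by
  rw [Set.disjoint_left]
  rintro ⟨⟨A, B, C⟩, t⟩ ⟨hp, -⟩ ⟨hq, -⟩
  rw [Finset.mem_coe, mem_A2] at hp hq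
  apply hne
  rw [← hp.2.1, ← hp.2.2, ← hq.2.1, ← hq.2.2]

lemma ncard_P_succ (n : ℕ) (h : ℤ) :
    (P (n+1) h).ncard
      = h.toNat * ((P n (h-1)).ncard + 2 * (P n h).ncard + (P n (h+1)).ncard) := by
  have fin : ∀ h', ((A2 h 1 1 : Set (ℕ × ℕ × ℕ)) ×ˢ P n h').Finite :=
    fun h' => (Finset.finite_toSet _).prod (P_finite n h')
  have fin' : ∀ b c h', ((A2 h b c : Set (ℕ × ℕ × ℕ)) ×ˢ P n h').Finite :=
    fun b c h' => (Finset.finite_toSet _).prod (P_finite n h')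
  rw [decomp, Set.ncard_image_of_injOn (extMap_injOn n h), S_eq]
  rw [Set.ncard_union_eq (by
      refine Set.disjoint_union_left.mpr ⟨Set.disjoint_union_left.mpr ⟨?_, ?_⟩, ?_⟩ <;>
        exact A2_prod_disj h (by decide) _ _)
    (((fin' 0 0 _).union (fin' 1 0 _)).union (fin' 0 1 _)) (fin' 1 1 _)]
  rw [Set.ncard_union_eq (by
      refine Set.disjoint_union_left.mpr ⟨?_, ?_⟩ <;> exact A2_prod_disj h (by decide) _ _)
    ((fin' 0 0 _).union (fin' 1 0 _)) (fin' 0 1 _)]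
  rw [Set.ncard_union_eq (A2_prod_disj h (by decide) _ _) (fin' 0 0 _) (fin' 1 0 _)]
  rw [ncard_sprod, ncard_sprod, ncard_sprod, ncard_sprod,
    Set.ncard_coe_finset, Set.ncard_coe_finset, Set.ncard_coe_finset, Set.ncard_coe_finset,
    A2_card, A2_card, A2_card, A2_card]
  ring

lemma count : ∀ (n : ℕ) (r : ℕ),
    (P (n+1) ((r : ℤ) + 1)).ncard = (n+1).factorial * n.choose r := by
  intro n
  induction n with
  | zero =>
    intro r
    rw [ncard_P_succ, ncard_P_zero, ncard_P_zero, ncard_P_zero]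
    rcases r with _ | s
    · norm_num
    · have h1 : ¬ ((((s:ℕ)+1 : ℕ) : ℤ) + 1 - 1 = 0) := by push_cast; omega
      have h2 : ¬ ((((s:ℕ)+1 : ℕ) : ℤ) + 1 = 0) := by push_cast; omega
      have h3 : ¬ ((((s:ℕ)+1 : ℕ) : ℤ) + 1 + 1 = 0) := by push_cast; omega
      rw [if_neg h1, if_neg h2, if_neg h3]
      simp [Nat.choose]
  | succ n ih =>
    intro r
    rw [ncard_P_succ]
    rcases r with _ | s
    · rw [show ((0:ℕ) : ℤ) + 1 - 1 = 0 from by norm_num, P_empty (n+1) (by omega) 0 le_rfl]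
      have c1 := ih 0
      have c2 := ih 1
      norm_num at c1 c2 ⊢
      rw [c1, c2, Nat.factorial_succ (n+1)]
      ring
    · rw [show (((s+1 : ℕ)) : ℤ) + 1 - 1 = ((s : ℕ) : ℤ) + 1 from by push_cast; ring,
        ih s, ih (s+1),
        show (((s+1 : ℕ)) : ℤ) + 1 + 1 = (((s+2 : ℕ)) : ℤ) + 1 from by push_cast; ring,
        ih (s+2),
        show ((((s+1 : ℕ)) : ℤ) + 1).toNat = s + 2 from by omega]
      have pas : (n+2).choose (s+2)
          = n.choose s + 2 * n.choose (s+1) + n.choose (s+2) := by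
        rw [show n+2 = (n+1)+1 from rfl, show s+2 = (s+1)+1 from rfl,
          Nat.choose_succ_succ, Nat.choose_succ_succ, Nat.choose_succ_succ]
        ring
      have key : (n+2) * (n+1).choose (s+1) = (n+2).choose (s+2) * (s+2) :=
        Nat.add_one_mul_choose_eq (n+1) (s+1)
      have main : (s+2) * (n.choose s + 2 * n.choose (s+1) + n.choose (s+2))
          = (n+2) * (n+1).choose (s+1) := by rw [key, pas]; ring
      calc (s+2) * ((n+1).factorial * n.choose s + 2 * ((n+1).factorial * n.choose (s+1))
            + (n+1).factorial * n.choose (s+2))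
          = (n+1).factorial * ((s+2) * (n.choose s + 2 * n.choose (s+1) + n.choose (s+2))) := by
            ring
        _ = (n+1).factorial * ((n+2) * (n+1).choose (s+1)) := by rw [main]
        _ = (n+1+1).factorial * (n+1).choose (s+1) := by rw [Nat.factorial_succ (n+1)]; ring

/-- The number of (1,2)-basis data of length `n ≥ 1` with final height `r + 1`
is `n! · C(n-1, r)`. -/
theorem card_datum_finalHeight (n r : ℕ) (hn : 1 ≤ n) :
    {t : (ℕ → ℕ) × (ℕ → ℕ) × (ℕ → ℕ) | IsDatum n t.1 t.2.1 t.2.2 ∧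
        finalHeight n t.2.1 t.2.2 = (r : ℤ) + 1}.ncard
      = n.factorial * (n - 1).choose r := by
  obtain ⟨m, rfl⟩ : ∃ m, n = m + 1 := ⟨n - 1, by omega⟩
  show (P (m+1) ((r : ℤ) + 1)).ncard = _
  rw [count m r, Nat.add_sub_cancel]
end

section
/- For every integer n ≥ 1 there exists a bijection ψ from the set of (1,2)-basis data of length n onto the set of segmented permutations of length n such that for every datum b = (α, β, γ): deg_θ(b) equals the number of ascents of ψ(b), deg_ξ(b) equals the number of descents of ψ(b), and deg_x(b) equals sminv(ψ(b)). -/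
/-- A segmented permutation of length `n`: a permutation `w` of `{1,…,n}` (encoded as a
function `ℕ → ℕ` which is a bijection of `{1,…,n}` onto itself and the identity elsewhere)
together with a set `D ⊆ {1,…,n-1}` of bar positions. -/
def IsSegPerm (n : ℕ) (w : ℕ → ℕ) (D : Finset ℕ) : Prop :=
  Set.BijOn w (Set.Icc 1 n) (Set.Icc 1 n) ∧ (∀ m, m ∉ Set.Icc 1 n → w m = m) ∧
    D ⊆ Finset.Ico 1 n

/-- The ascents of a segmented permutation: indices `i ∈ {1,…,n-1}` with `i ∉ D` and
`w i < w (i+1)`. -/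
def ascFin (n : ℕ) (w : ℕ → ℕ) (D : Finset ℕ) : Finset ℕ :=
  (Finset.Ico 1 n).filter fun i => i ∉ D ∧ w i < w (i + 1)

/-- The descents of a segmented permutation: indices `i ∈ {1,…,n-1}` with `i ∉ D` and
`w i > w (i+1)`. -/
def descFin (n : ℕ) (w : ℕ → ℕ) (D : Finset ℕ) : Finset ℕ :=
  (Finset.Ico 1 n).filter fun i => i ∉ D ∧ w (i + 1) < w i

/-- The number of sminversions: pairs `(i,j)` with `1 ≤ i < j ≤ n`, `w i > w j`, and
either `j` initial (`j = 1` or `j - 1 ∈ D`) or `w (j-1) > w i`. -/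
def sminv (n : ℕ) (w : ℕ → ℕ) (D : Finset ℕ) : ℕ :=
  ((Finset.Icc 1 n ×ˢ Finset.Icc 1 n).filter fun p =>
    p.1 < p.2 ∧ w p.2 < w p.1 ∧ (p.2 = 1 ∨ p.2 - 1 ∈ D ∨ w p.1 < w (p.2 - 1))).card

namespace SB
open Finset

noncomputable def pinv (w : ℕ → ℕ) : ℕ → ℕ := Function.invFun w

variable {n : ℕ} {w : ℕ → ℕ} {D : Finset ℕ}

theorem bij (h : IsSegPerm n w D) : Function.Bijective w := by
  constructor
  · intro a b hab
    by_cases ha : a ∈ Set.Icc 1 n <;> by_cases hb : b ∈ Set.Icc 1 n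
    · exact h.1.injOn ha hb hab
    · exfalso; rw [h.2.1 b hb] at hab; exact hb (hab ▸ h.1.mapsTo ha)
    · exfalso; rw [h.2.1 a ha] at hab; exact ha (hab ▸ h.1.mapsTo hb)
    · rw [h.2.1 a ha, h.2.1 b hb] at hab; exact hab
  · intro y
    by_cases hy : y ∈ Set.Icc 1 n
    · obtain ⟨x, hx, hxy⟩ := h.1.surjOn hy; exact ⟨x, hxy⟩
    · exact ⟨y, h.2.1 y hy⟩

theorem w_pinv (h : IsSegPerm n w D) (j : ℕ) : w (pinv w j) = j :=
  Function.rightInverse_invFun (bij h).2 j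

theorem pinv_w (h : IsSegPerm n w D) (q : ℕ) : pinv w (w q) = q :=
  Function.leftInverse_invFun (bij h).1 q

theorem mem_iff (h : IsSegPerm n w D) {q : ℕ} : (1 ≤ w q ∧ w q ≤ n) ↔ (1 ≤ q ∧ q ≤ n) := by
  constructor
  · intro hq
    by_contra hc
    have : w q = q := h.2.1 q (by simpa [Set.mem_Icc] using hc)
    rw [this] at hq; exact hc hq
  · intro hq
    have := h.1.mapsTo (Set.mem_Icc.2 hq)
    simpa [Set.mem_Icc] using this

theorem pinv_mem (h : IsSegPerm n w D) {j : ℕ} (hj : 1 ≤ j ∧ j ≤ n) :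
    1 ≤ pinv w j ∧ pinv w j ≤ n :=
  (mem_iff h).1 (by rwa [w_pinv h])

theorem w_zero (h : IsSegPerm n w D) : w 0 = 0 := h.2.1 0 (by simp [Set.mem_Icc])

end SB

namespace SB
open Finset

variable {n : ℕ} {w : ℕ → ℕ} {D : Finset ℕ}

/-- β component of the bijection: indicator that value `j` has a smaller unbarred left
neighbor. -/
noncomputable def phiB (n : ℕ) (w : ℕ → ℕ) (D : Finset ℕ) (j : ℕ) : ℕ :=
  if 1 ≤ j ∧ j ≤ n ∧ 2 ≤ pinv w j ∧ pinv w j - 1 ∉ D ∧ w (pinv w j - 1) < j then 1 else 0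

noncomputable def phiG (n : ℕ) (w : ℕ → ℕ) (D : Finset ℕ) (j : ℕ) : ℕ :=
  if 1 ≤ j ∧ j ≤ n ∧ pinv w j < n ∧ pinv w j ∉ D ∧ w (pinv w j + 1) < j then 1 else 0

noncomputable def phiA (n : ℕ) (w : ℕ → ℕ) (D : Finset ℕ) (j : ℕ) : ℕ :=
  ((Finset.Icc 1 n).filter fun q => pinv w j < q ∧ w q < j ∧ (q - 1 ∈ D ∨ j < w (q - 1))).card

theorem phiB_out {j : ℕ} (hj : j ∉ Finset.Icc 1 n) : phiB n w D j = 0 := by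
  rw [Finset.mem_Icc] at hj
  simp only [phiB, ite_eq_right_iff]
  intro hc; exact absurd ⟨hc.1, hc.2.1⟩ hj

theorem phiG_out {j : ℕ} (hj : j ∉ Finset.Icc 1 n) : phiG n w D j = 0 := by
  rw [Finset.mem_Icc] at hj
  simp only [phiG, ite_eq_right_iff]
  intro hc; exact absurd ⟨hc.1, hc.2.1⟩ hj

theorem phiA_out (h : IsSegPerm n w D) {j : ℕ} (hj : j ∉ Finset.Icc 1 n) :
    phiA n w D j = 0 := by
  rw [Finset.mem_Icc] at hj
  rw [phiA, Finset.card_eq_zero, Finset.filter_eq_empty_iff]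
  intro q hq
  rw [Finset.mem_Icc] at hq
  rcases Nat.lt_or_ge j 1 with hj1 | hj1
  · interval_cases j
    intro hc
    exact absurd hc.2.1 (by omega)
  · have hjn : n < j := by omega
    have : pinv w j = j := by
      have : w j = j := h.2.1 j (by simp [Set.mem_Icc]; omega)
      conv_lhs => rw [← this]
      exact pinv_w h j
    rw [this]
    intro hc; omega

theorem sum_phiB (h : IsSegPerm n w D) :
    ∑ j ∈ Finset.Icc 1 n, phiB n w D j = (ascFin n w D).card := by
  rw [show (∑ j ∈ Finset.Icc 1 n, phiB n w D j) =
      ((Finset.Icc 1 n).filter fun j => 1 ≤ j ∧ j ≤ n ∧ 2 ≤ pinv w j ∧ pinv w j - 1 ∉ D ∧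
        w (pinv w j - 1) < j).card by
    rw [Finset.card_filter]; rfl]
  apply Finset.card_bij (fun j _ => pinv w j - 1)
  · intro j hj
    simp only [Finset.mem_filter, Finset.mem_Icc] at hj
    obtain ⟨-, hj1, hjn, hp2, hpD, hlt⟩ := hj
    have hpm := pinv_mem h ⟨hj1, hjn⟩
    simp only [ascFin, Finset.mem_filter, Finset.mem_Ico]
    have : pinv w j - 1 + 1 = pinv w j := by omega
    refine ⟨⟨by omega, by omega⟩, hpD, ?_⟩
    rw [this, w_pinv h]; exact hlt
  · intro j₁ hj₁ j₂ hj₂ he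
    simp only [Finset.mem_filter, Finset.mem_Icc] at hj₁ hj₂
    have : pinv w j₁ = pinv w j₂ := by omega
    have := congrArg w this
    rwa [w_pinv h, w_pinv h] at this
  · intro i hi
    simp only [ascFin, Finset.mem_filter, Finset.mem_Ico] at hi
    obtain ⟨⟨hi1, hin⟩, hiD, hlt⟩ := hi
    refine ⟨w (i + 1), ?_, ?_⟩
    · have hm : 1 ≤ w (i+1) ∧ w (i+1) ≤ n := (mem_iff h).2 ⟨by omega, by omega⟩
      simp only [Finset.mem_filter, Finset.mem_Icc, pinv_w h]
      exact ⟨⟨hm.1, hm.2⟩, hm.1, hm.2, by omega, by simpa using hiD, by simpa using hlt⟩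
    · simp [pinv_w h]

theorem sum_phiG (h : IsSegPerm n w D) :
    ∑ j ∈ Finset.Icc 1 n, phiG n w D j = (descFin n w D).card := by
  rw [show (∑ j ∈ Finset.Icc 1 n, phiG n w D j) =
      ((Finset.Icc 1 n).filter fun j => 1 ≤ j ∧ j ≤ n ∧ pinv w j < n ∧ pinv w j ∉ D ∧
        w (pinv w j + 1) < j).card by
    rw [Finset.card_filter]; rfl]
  apply Finset.card_bij (fun j _ => pinv w j)
  · intro j hj
    simp only [Finset.mem_filter, Finset.mem_Icc] at hj
    obtain ⟨-, hj1, hjn, hpn, hpD, hlt⟩ := hj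
    have hpm := pinv_mem h ⟨hj1, hjn⟩
    simp only [descFin, Finset.mem_filter, Finset.mem_Ico]
    refine ⟨⟨by omega, by omega⟩, hpD, ?_⟩
    rw [w_pinv h]; exact hlt
  · intro j₁ hj₁ j₂ hj₂ he
    have := congrArg w he
    rwa [w_pinv h, w_pinv h] at this
  · intro i hi
    simp only [descFin, Finset.mem_filter, Finset.mem_Ico] at hi
    obtain ⟨⟨hi1, hin⟩, hiD, hlt⟩ := hi
    refine ⟨w i, ?_, pinv_w h i⟩
    have hm : 1 ≤ w i ∧ w i ≤ n := (mem_iff h).2 ⟨by omega, by omega⟩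
    simp only [Finset.mem_filter, Finset.mem_Icc, pinv_w h]
    exact ⟨⟨hm.1, hm.2⟩, hm.1, hm.2, by omega, hiD, hlt⟩

theorem sum_phiA (h : IsSegPerm n w D) :
    ∑ j ∈ Finset.Icc 1 n, phiA n w D j = sminv n w D := by
  rw [sminv, Finset.card_eq_sum_card_fiberwise
    (f := fun pq : ℕ × ℕ => w pq.1) (t := Finset.Icc 1 n) (by
      intro pq hpq
      simp only [Finset.mem_coe, Finset.mem_filter, Finset.mem_product, Finset.mem_Icc] at hpq
      exact Finset.mem_Icc.2 ((mem_iff h).2 hpq.1.1))]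
  apply Finset.sum_congr rfl
  intro j hj
  rw [Finset.mem_Icc] at hj
  rw [phiA]
  apply Finset.card_bij (fun q _ => (pinv w j, q))
  · intro q hq
    simp only [Finset.mem_filter, Finset.mem_Icc] at hq
    obtain ⟨⟨hq1, hqn⟩, hpq, hwq, hor⟩ := hq
    have hpm := pinv_mem h hj
    simp only [Finset.mem_filter, Finset.mem_product, Finset.mem_Icc]
    refine ⟨⟨⟨⟨hpm.1, hpm.2⟩, hq1, hqn⟩, hpq, by rw [w_pinv h]; exact hwq, ?_⟩, w_pinv h j⟩
    rw [w_pinv h]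
    rcases hor with h1 | h2
    · exact Or.inr (Or.inl h1)
    · exact Or.inr (Or.inr h2)
  · intro q₁ h₁ q₂ h₂ he
    exact congrArg Prod.snd he
  · intro pq hpq
    simp only [Finset.mem_filter, Finset.mem_product, Finset.mem_Icc] at hpq
    obtain ⟨⟨⟨hp, hq⟩, hlt, hwlt, hor⟩, hwp⟩ := hpq
    refine ⟨pq.2, ?_, ?_⟩
    · have hpinv : pinv w j = pq.1 := by rw [← hwp, pinv_w h]
      simp only [Finset.mem_filter, Finset.mem_Icc, hpinv]
      refine ⟨⟨hq.1, hq.2⟩, hlt, hwp ▸ hwlt, ?_⟩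
      rcases hor with h1 | h2 | h3
      · omega
      · exact Or.inl h2
      · exact Or.inr (by rw [← hwp]; exact h3)
    · have hpinv : pinv w j = pq.1 := by rw [← hwp, pinv_w h]
      rw [hpinv]

end SB

namespace SB
open Finset

variable {n : ℕ} {w : ℕ → ℕ} {D : Finset ℕ}

/-- Elements of value `≤ i` that are initial in the stage-`i` segmented permutation. -/
def IniSet (n : ℕ) (w : ℕ → ℕ) (D : Finset ℕ) (i : ℕ) : Finset ℕ :=
  (Finset.Icc 1 n).filter fun q => w q ≤ i ∧ (q = 1 ∨ q - 1 ∈ D ∨ i < w (q - 1))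

def NonSet (n : ℕ) (w : ℕ → ℕ) (D : Finset ℕ) (i : ℕ) : Finset ℕ :=
  (Finset.Icc 1 n).filter fun q => w q ≤ i ∧ ¬(q = 1 ∨ q - 1 ∈ D ∨ i < w (q - 1))

theorem ini_non_card (h : IsSegPerm n w D) {i : ℕ} (hi : i ≤ n) :
    (IniSet n w D i).card + (NonSet n w D i).card = i := by
  have hsplit := Finset.card_filter_add_card_filter_not
    (s := (Finset.Icc 1 n).filter fun q => w q ≤ i)
    (p := fun q => q = 1 ∨ q - 1 ∈ D ∨ i < w (q - 1))
  have h1 : ((Finset.Icc 1 n).filter fun q => w q ≤ i).filter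
      (fun q => q = 1 ∨ q - 1 ∈ D ∨ i < w (q - 1)) = IniSet n w D i := by
    rw [IniSet, Finset.filter_filter]
  have h2 : ((Finset.Icc 1 n).filter fun q => w q ≤ i).filter
      (fun q => ¬(q = 1 ∨ q - 1 ∈ D ∨ i < w (q - 1))) = NonSet n w D i := by
    rw [NonSet, Finset.filter_filter]
  rw [h1, h2] at hsplit
  rw [hsplit]
  have : ((Finset.Icc 1 n).filter fun q => w q ≤ i).card = (Finset.Icc 1 i).card := by
    apply Finset.card_bij (fun q _ => w q)
    · intro q hq
      simp only [Finset.mem_filter, Finset.mem_Icc] at hq ⊢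
      exact ⟨((mem_iff h).2 hq.1).1, hq.2⟩
    · intro q₁ h₁ q₂ h₂ he
      exact (bij h).1 he
    · intro j hj
      simp only [Finset.mem_Icc] at hj
      refine ⟨pinv w j, ?_, w_pinv h j⟩
      have := pinv_mem h ⟨hj.1, le_trans hj.2 hi⟩
      simp only [Finset.mem_filter, Finset.mem_Icc, w_pinv h]
      exact ⟨⟨this.1, this.2⟩, hj.2⟩
  rw [this, Nat.card_Icc]; omega

theorem sum_bg_eq_non (h : IsSegPerm n w D) {i : ℕ} (hi : i ≤ n) :
    ∑ j ∈ Finset.Icc 1 i, (phiB n w D j + phiG n w D j) = (NonSet n w D i).card := by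
  rw [Finset.sum_add_distrib]
  have hsplit := Finset.card_filter_add_card_filter_not
    (s := NonSet n w D i) (p := fun q => w (q - 1) < w q)
  have hB : ∑ j ∈ Finset.Icc 1 i, phiB n w D j =
      ((NonSet n w D i).filter fun q => w (q - 1) < w q).card := by
    rw [show (∑ j ∈ Finset.Icc 1 i, phiB n w D j) =
        ((Finset.Icc 1 i).filter fun j => 1 ≤ j ∧ j ≤ n ∧ 2 ≤ pinv w j ∧ pinv w j - 1 ∉ D ∧
          w (pinv w j - 1) < j).card by rw [Finset.card_filter]; rfl]
    apply Finset.card_bij (fun j _ => pinv w j)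
    · intro j hj
      simp only [Finset.mem_filter, Finset.mem_Icc] at hj
      obtain ⟨⟨-, hji⟩, hj1, hjn, hp2, hpD, hlt⟩ := hj
      have hpm := pinv_mem h ⟨hj1, hjn⟩
      simp only [NonSet, Finset.mem_filter, Finset.mem_Icc, w_pinv h]
      refine ⟨⟨⟨hpm.1, hpm.2⟩, hji, ?_⟩, hlt⟩
      push_neg
      exact ⟨by omega, hpD, by omega⟩
    · intro j₁ h₁ j₂ h₂ he
      have := congrArg w he; rwa [w_pinv h, w_pinv h] at this
    · intro q hq
      simp only [NonSet, Finset.mem_filter, Finset.mem_Icc] at hq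
      obtain ⟨⟨⟨hq1, hqn⟩, hwq, hnot⟩, hasc⟩ := hq
      push_neg at hnot
      obtain ⟨hne1, hqD, hwle⟩ := hnot
      have hw1 : 1 ≤ w q := ((mem_iff h).2 ⟨hq1, hqn⟩).1
      refine ⟨w q, ?_, pinv_w h q⟩
      simp only [Finset.mem_filter, Finset.mem_Icc, pinv_w h]
      exact ⟨⟨hw1, hwq⟩, hw1, ((mem_iff h).2 ⟨hq1, hqn⟩).2, by omega, hqD, hasc⟩
  have hG : ∑ j ∈ Finset.Icc 1 i, phiG n w D j =
      ((NonSet n w D i).filter fun q => ¬ w (q - 1) < w q).card := by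
    rw [show (∑ j ∈ Finset.Icc 1 i, phiG n w D j) =
        ((Finset.Icc 1 i).filter fun j => 1 ≤ j ∧ j ≤ n ∧ pinv w j < n ∧ pinv w j ∉ D ∧
          w (pinv w j + 1) < j).card by rw [Finset.card_filter]; rfl]
    apply Finset.card_bij (fun j _ => pinv w j + 1)
    · intro j hj
      simp only [Finset.mem_filter, Finset.mem_Icc] at hj
      obtain ⟨⟨-, hji⟩, hj1, hjn, hpn, hpD, hlt⟩ := hj
      have hpm := pinv_mem h ⟨hj1, hjn⟩
      simp only [NonSet, Finset.mem_filter, Finset.mem_Icc, Nat.add_sub_cancel, w_pinv h]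
      have hwj : w (pinv w j) = j := w_pinv h j
      have hw1 : 1 ≤ w (pinv w j + 1) := ((mem_iff h).2 ⟨by omega, by omega⟩).1
      refine ⟨⟨⟨by omega, by omega⟩, by omega, ?_⟩, by omega⟩
      push_neg
      exact ⟨by omega, hpD, by omega⟩
    · intro j₁ h₁ j₂ h₂ he
      have : pinv w j₁ = pinv w j₂ := by omega
      have := congrArg w this; rwa [w_pinv h, w_pinv h] at this
    · intro q hq
      simp only [NonSet, Finset.mem_filter, Finset.mem_Icc] at hq
      obtain ⟨⟨⟨hq1, hqn⟩, hwq, hnot⟩, hdesc⟩ := hq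
      push_neg at hnot
      obtain ⟨hne1, hqD, hwle⟩ := hnot
      have hq2 : 2 ≤ q := by omega
      have hm : 1 ≤ w (q-1) ∧ w (q-1) ≤ n := (mem_iff h).2 ⟨by omega, by omega⟩
      refine ⟨w (q - 1), ?_, by rw [pinv_w h]; omega⟩
      simp only [Finset.mem_filter, Finset.mem_Icc, pinv_w h]
      have hq11 : q - 1 + 1 = q := by omega
      have hne : w q ≠ w (q - 1) := fun he => by have := (bij h).1 he; omega
      exact ⟨⟨hm.1, hwle⟩, hm.1, hm.2, by omega, hqD, by rw [hq11]; omega⟩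
  rw [hB, hG, hsplit]

theorem phiA_lt_ini (h : IsSegPerm n w D) {i : ℕ} (hi1 : 1 ≤ i) (hin : i ≤ n) :
    phiA n w D i + 1 ≤ (IniSet n w D i).card := by
  set S := (Finset.Icc 1 n).filter (fun q => w q ≤ i) with hS
  have hpm := pinv_mem h ⟨hi1, hin⟩
  have hSne : S.Nonempty := ⟨pinv w i, by
    simp only [hS, Finset.mem_filter, Finset.mem_Icc, w_pinv h]
    exact ⟨⟨hpm.1, hpm.2⟩, le_refl i⟩⟩
  set q0 := S.min' hSne with hq0
  have hq0S : q0 ∈ S := Finset.min'_mem S hSne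
  simp only [hS, Finset.mem_filter, Finset.mem_Icc] at hq0S
  have hq0le : q0 ≤ pinv w i := Finset.min'_le S _ (by
    simp only [hS, Finset.mem_filter, Finset.mem_Icc, w_pinv h]
    exact ⟨⟨hpm.1, hpm.2⟩, le_refl i⟩)
  have hq0ini : q0 ∈ IniSet n w D i := by
    simp only [IniSet, Finset.mem_filter, Finset.mem_Icc]
    refine ⟨⟨hq0S.1.1, hq0S.1.2⟩, hq0S.2, ?_⟩
    by_cases hq01 : q0 = 1
    · exact Or.inl hq01
    · refine Or.inr (Or.inr ?_)
      by_contra hc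
      push_neg at hc
      have : q0 - 1 ∈ S := by
        simp only [hS, Finset.mem_filter, Finset.mem_Icc]
        exact ⟨⟨by omega, by omega⟩, hc⟩
      have := Finset.min'_le S _ this
      omega
  have hsub : insert q0 ((Finset.Icc 1 n).filter fun q =>
      pinv w i < q ∧ w q < i ∧ (q - 1 ∈ D ∨ i < w (q - 1))) ⊆ IniSet n w D i := by
    intro q hq
    rcases Finset.mem_insert.1 hq with rfl | hq
    · exact hq0ini
    · simp only [Finset.mem_filter, Finset.mem_Icc] at hq
      simp only [IniSet, Finset.mem_filter, Finset.mem_Icc]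
      exact ⟨⟨hq.1.1, hq.1.2⟩, le_of_lt hq.2.2.1, Or.inr hq.2.2.2⟩
  have hq0not : q0 ∉ (Finset.Icc 1 n).filter fun q =>
      pinv w i < q ∧ w q < i ∧ (q - 1 ∈ D ∨ i < w (q - 1)) := by
    simp only [Finset.mem_filter, Finset.mem_Icc]
    intro hc
    omega
  calc phiA n w D i + 1
      = (insert q0 ((Finset.Icc 1 n).filter fun q =>
          pinv w i < q ∧ w q < i ∧ (q - 1 ∈ D ∨ i < w (q - 1)))).card := by
        rw [Finset.card_insert_of_notMem hq0not, phiA]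
    _ ≤ _ := Finset.card_le_card hsub

theorem phi_isDatum (h : IsSegPerm n w D) :
    IsDatum n (phiA n w D) (phiB n w D) (phiG n w D) := by
  refine ⟨fun i hi => ⟨phiA_out h hi, phiB_out hi, phiG_out hi⟩, ?_, ?_⟩
  · intro i _
    constructor
    · unfold phiB; split <;> omega
    · unfold phiG; split <;> omega
  · intro i hi
    rw [Finset.mem_Icc] at hi
    have hA1 := ini_non_card h hi.2
    have hA2 := sum_bg_eq_non h hi.2
    have hA3 := phiA_lt_ini h hi.1 hi.2
    have hcast : ∑ j ∈ Finset.Icc 1 i, ((1:ℤ) - (phiB n w D j) - (phiG n w D j)) =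
        (i : ℤ) - (∑ j ∈ Finset.Icc 1 i, (phiB n w D j + phiG n w D j) : ℕ) := by
      push_cast
      rw [Finset.sum_sub_distrib, Finset.sum_sub_distrib, Finset.sum_add_distrib]
      simp [Nat.card_Icc]
      ring
    rw [hcast]
    omega

/-- The number of blocks: `∑ (1 - β - γ) = |D| + 1`, in ℕ form. -/
theorem ini_card_top (h : IsSegPerm n w D) (hn : 1 ≤ n) :
    (IniSet n w D n).card = D.card + 1 := by
  have : IniSet n w D n = insert 1 (D.image (· + 1)) := by
    ext q
    simp only [IniSet, Finset.mem_filter, Finset.mem_Icc, Finset.mem_insert, Finset.mem_image]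
    constructor
    · rintro ⟨⟨hq1, hqn⟩, -, h1 | hD | hgt⟩
      · exact Or.inl h1
      · exact Or.inr ⟨q - 1, hD, by omega⟩
      · by_cases h1 : q = 1
        · exact Or.inl h1
        · exfalso
          have hm := (mem_iff h (q := q - 1)).2 ⟨by omega, by omega⟩
          omega
    · rintro (rfl | ⟨d, hd, rfl⟩)
      · exact ⟨⟨le_refl 1, hn⟩, ((mem_iff h).2 ⟨le_refl 1, hn⟩).2, Or.inl rfl⟩
      · have hd' := h.2.2 hd
        rw [Finset.mem_Ico] at hd'
        refine ⟨⟨by omega, by omega⟩, ((mem_iff h).2 ⟨by omega, by omega⟩).2, ?_⟩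
        exact Or.inr (Or.inl (by simpa using hd))
  rw [this, Finset.card_insert_of_notMem (by
    simp only [Finset.mem_image]
    rintro ⟨d, hd, hd1⟩
    have := h.2.2 hd
    rw [Finset.mem_Ico] at this
    omega)]
  rw [Finset.card_image_of_injective _ (fun a b => by omega)]

theorem sum_bg_top (h : IsSegPerm n w D) (hn : 1 ≤ n) :
    (∑ j ∈ Finset.Icc 1 n, (phiB n w D j + phiG n w D j)) + D.card + 1 = n := by
  have := ini_non_card h (le_refl n)
  have := sum_bg_eq_non h (le_refl n)
  have := ini_card_top h hn
  omega

end SB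

namespace SB
open Finset

variable {n : ℕ} {w : ℕ → ℕ} {D : Finset ℕ}

/-- Remove the value `n` from a segmented permutation of length `n`. -/
noncomputable def remW (n : ℕ) (w : ℕ → ℕ) : ℕ → ℕ := fun q =>
  if q < pinv w n then w q else if q ≤ n - 1 then w (q + 1) else q

noncomputable def remD (n : ℕ) (w : ℕ → ℕ) (D : Finset ℕ) : Finset ℕ :=
  (Finset.Ico 1 (n - 1)).filter fun j =>
    (j < pinv w n - 1 ∧ j ∈ D) ∨ j = pinv w n - 1 ∨ (pinv w n ≤ j ∧ j + 1 ∈ D)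

theorem pinv_top_mem (h : IsSegPerm n w D) (hn : 1 ≤ n) :
    1 ≤ pinv w n ∧ pinv w n ≤ n := pinv_mem h ⟨hn, le_refl n⟩

theorem w_ne_top (h : IsSegPerm n w D) (hn : 1 ≤ n) {q : ℕ} (hq : q ≠ pinv w n) :
    w q ≠ n := fun he => hq (by rw [← pinv_w h q, he])

theorem rem_isSegPerm (h : IsSegPerm n w D) (hn : 2 ≤ n) :
    IsSegPerm (n - 1) (remW n w) (remD n w D) := by
  have hp := pinv_top_mem h (by omega)
  set p := pinv w n with hpdef
  have hwp : w p = n := w_pinv h n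
  have hval : ∀ q, 1 ≤ q → q ≤ n - 1 → 1 ≤ remW n w q ∧ remW n w q ≤ n - 1 := by
    intro q hq1 hq2
    rcases Nat.lt_or_ge q p with hlt | hge
    · rw [remW, if_pos hlt]
      have hm := (mem_iff h (q := q)).2 ⟨hq1, by omega⟩
      have hne : w q ≠ n := w_ne_top h (by omega) (by omega)
      omega
    · rw [remW, if_neg (by omega), if_pos hq2]
      have hm := (mem_iff h (q := q + 1)).2 ⟨by omega, by omega⟩
      have hne : w (q + 1) ≠ n := w_ne_top h (by omega) (by omega)
      omega
  refine ⟨⟨?_, ?_, ?_⟩, ?_, ?_⟩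
  · intro q hq
    rw [Set.mem_Icc] at hq ⊢
    exact hval q hq.1 hq.2
  · intro q1 hq1 q2 hq2 he
    rw [Set.mem_Icc] at hq1 hq2
    have e : ∀ q, q ≤ n - 1 → remW n w q = w (if q < p then q else q + 1) := by
      intro q hqn
      rcases Nat.lt_or_ge q p with hlt | hge
      · rw [remW, if_pos hlt, if_pos hlt]
      · rw [remW, if_neg (by omega), if_pos hqn, if_neg (by omega)]
    rw [e q1 hq1.2, e q2 hq2.2] at he
    have := (bij h).1 he
    split at this <;> split at this <;> omega
  · intro y hy
    rw [Set.mem_Icc] at hy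
    set q := pinv w y with hq
    have hqm := pinv_mem h ⟨hy.1, by omega⟩
    have hwq : w q = y := w_pinv h y
    have hqp : q ≠ p := by
      intro he; rw [he, hwp] at hwq; omega
    rcases Nat.lt_or_ge q p with hlt | hge
    · refine ⟨q, Set.mem_Icc.2 ⟨hqm.1, by omega⟩, ?_⟩
      rw [remW, if_pos hlt, hwq]
    · have hgt : p < q := by omega
      refine ⟨q - 1, Set.mem_Icc.2 ⟨by omega, by omega⟩, ?_⟩
      rw [remW, if_neg (by omega), if_pos (by omega)]
      rw [show q - 1 + 1 = q by omega, hwq]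
  · intro q hq
    rw [Set.mem_Icc] at hq
    rw [remW]
    rcases Nat.lt_or_ge q p with hlt | hge
    · rw [if_pos hlt]
      apply h.2.1
      rw [Set.mem_Icc]
      omega
    · rw [if_neg (by omega), if_neg (by omega)]
  · intro j hj
    rw [remD, Finset.mem_filter] at hj
    exact hj.1

theorem remW_lt {q : ℕ} (hq : q < pinv w n) : remW n w q = w q := by
  rw [remW, if_pos hq]

theorem remW_ge {q : ℕ} (hq1 : pinv w n ≤ q) (hq2 : q ≤ n - 1) : remW n w q = w (q + 1) := by
  rw [remW, if_neg (by omega), if_pos hq2]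

theorem mem_remD {j : ℕ} : j ∈ remD n w D ↔ (1 ≤ j ∧ j < n - 1) ∧
    ((j < pinv w n - 1 ∧ j ∈ D) ∨ j = pinv w n - 1 ∨ (pinv w n ≤ j ∧ j + 1 ∈ D)) := by
  rw [remD, Finset.mem_filter, Finset.mem_Ico]

/-- The position of `j ≤ n-1` in the reduced word. -/
theorem pinv_remW (h : IsSegPerm n w D) (hn : 2 ≤ n) {j : ℕ} (hj1 : 1 ≤ j)
    (hj2 : j ≤ n - 1) :
    pinv (remW n w) j = if pinv w j < pinv w n then pinv w j else pinv w j - 1 := by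
  have h' := rem_isSegPerm h hn
  have hp := pinv_top_mem h (by omega)
  have hq := pinv_mem h ⟨hj1, by omega⟩
  have hwq : w (pinv w j) = j := w_pinv h j
  have hqp : pinv w j ≠ pinv w n := by
    intro he
    rw [he, w_pinv h n] at hwq
    omega
  split
  · rename_i hlt
    have e : remW n w (pinv w j) = j := by rw [remW_lt hlt, hwq]
    conv_lhs => rw [← e]
    rw [pinv_w h']
  · rename_i hge
    have hgt : pinv w n < pinv w j := by omega
    have e : remW n w (pinv w j - 1) = j := by
      rw [remW_ge (by omega) (by omega), show pinv w j - 1 + 1 = pinv w j by omega, hwq]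
    conv_lhs => rw [← e]
    rw [pinv_w h']

end SB

namespace SB
open Finset

variable {n : ℕ} {w : ℕ → ℕ} {D : Finset ℕ}

theorem mem_remD_lo (hp2 : 2 ≤ pinv w n) (hpn : pinv w n ≤ n) {d : ℕ} (hd1 : 1 ≤ d)
    (hd2 : d ≤ pinv w n - 2) : d ∈ remD n w D ↔ d ∈ D := by
  rw [mem_remD]
  constructor
  · rintro ⟨-, hc | hc | hc⟩
    · exact hc.2
    · omega
    · omega
  · intro hd
    exact ⟨⟨hd1, by omega⟩, Or.inl ⟨by omega, hd⟩⟩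

theorem mem_remD_mid (hp2 : 2 ≤ pinv w n) (hpn : pinv w n ≤ n - 1) :
    pinv w n - 1 ∈ remD n w D := by
  rw [mem_remD]
  exact ⟨⟨by omega, by omega⟩, Or.inr (Or.inl rfl)⟩

theorem mem_remD_hi (hp1 : 1 ≤ pinv w n) {d : ℕ} (hd1 : pinv w n ≤ d) (hd2 : d ≤ n - 2) :
    d ∈ remD n w D ↔ d + 1 ∈ D := by
  rw [mem_remD]
  constructor
  · rintro ⟨-, hc | hc | hc⟩
    · omega
    · omega
    · exact hc.2
  · intro hd
    exact ⟨⟨by omega, by omega⟩, Or.inr (Or.inr ⟨hd1, hd⟩)⟩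

theorem phiB_rem (h : IsSegPerm n w D) (hn : 2 ≤ n) {j : ℕ} (hj1 : 1 ≤ j) (hj2 : j ≤ n - 1) :
    phiB (n - 1) (remW n w) (remD n w D) j = phiB n w D j := by
  have hp := pinv_top_mem h (by omega)
  have hq := pinv_mem h ⟨hj1, by omega⟩
  have hwq : w (pinv w j) = j := w_pinv h j
  have hwp : w (pinv w n) = n := w_pinv h n
  have hqp : pinv w j ≠ pinv w n := fun he => by rw [he, hwp] at hwq; omega
  have hp' := pinv_remW h hn hj1 hj2
  unfold phiB
  refine if_congr ?_ rfl rfl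
  rw [hp']
  rcases Nat.lt_or_ge (pinv w j) (pinv w n) with hA | hrest
  · rw [if_pos hA]
    constructor
    · rintro ⟨-, -, h3, h4, h5⟩
      rw [remW_lt (by omega)] at h5
      refine ⟨hj1, by omega, h3, fun hc => h4 ?_, h5⟩
      rw [mem_remD_lo (by omega) hp.2 (by omega) (by omega)]
      exact hc
    · rintro ⟨-, -, h3, h4, h5⟩
      refine ⟨hj1, hj2, h3, fun hc => h4 ?_, ?_⟩
      · rw [mem_remD_lo (by omega) hp.2 (by omega) (by omega)] at hc; exact hc
      · rw [remW_lt (by omega)]; exact h5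
  · have hB : pinv w n < pinv w j := by omega
    rw [if_neg (by omega)]
    rcases eq_or_lt_of_le (Nat.succ_le_of_lt hB) with hC | hD2
    · constructor
      · rintro ⟨-, -, h3, h4, h5⟩
        exfalso
        apply h4
        have he : pinv w j - 1 - 1 = pinv w n - 1 := by omega
        rw [he]
        exact mem_remD_mid (by omega) (by omega)
      · rintro ⟨-, -, h3, h4, h5⟩
        exfalso
        have he : pinv w j - 1 = pinv w n := by omega
        rw [he, hwp] at h5
        omega
    · constructor
      · rintro ⟨-, -, h3, h4, h5⟩
        rw [remW_ge (by omega) (by omega),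
          show pinv w j - 1 - 1 + 1 = pinv w j - 1 by omega] at h5
        refine ⟨hj1, by omega, by omega, fun hc => h4 ?_, h5⟩
        rw [mem_remD_hi (by omega) (by omega) (by omega),
          show pinv w j - 1 - 1 + 1 = pinv w j - 1 by omega]
        exact hc
      · rintro ⟨-, -, h3, h4, h5⟩
        refine ⟨hj1, hj2, by omega, fun hc => h4 ?_, ?_⟩
        · rw [mem_remD_hi (by omega) (by omega) (by omega),
            show pinv w j - 1 - 1 + 1 = pinv w j - 1 by omega] at hc
          exact hc
        · rw [remW_ge (by omega) (by omega),
            show pinv w j - 1 - 1 + 1 = pinv w j - 1 by omega]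
          exact h5

theorem phiG_rem (h : IsSegPerm n w D) (hn : 2 ≤ n) {j : ℕ} (hj1 : 1 ≤ j) (hj2 : j ≤ n - 1) :
    phiG (n - 1) (remW n w) (remD n w D) j = phiG n w D j := by
  have hp := pinv_top_mem h (by omega)
  have hq := pinv_mem h ⟨hj1, by omega⟩
  have hwq : w (pinv w j) = j := w_pinv h j
  have hwp : w (pinv w n) = n := w_pinv h n
  have hqp : pinv w j ≠ pinv w n := fun he => by rw [he, hwp] at hwq; omega
  have hp' := pinv_remW h hn hj1 hj2
  unfold phiG
  refine if_congr ?_ rfl rfl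
  rw [hp']
  rcases Nat.lt_or_ge (pinv w j) (pinv w n) with hA | hrest
  · rw [if_pos hA]
    rcases eq_or_lt_of_le (Nat.succ_le_of_lt hA) with hC | hD2
    · -- pinv w j = pinv w n - 1 : right neighbor is the letter n
      constructor
      · rintro ⟨-, -, h3, h4, h5⟩
        exfalso
        apply h4
        have he : pinv w j = pinv w n - 1 := by omega
        rw [he]
        exact mem_remD_mid (by omega) (by omega)
      · rintro ⟨-, -, h3, h4, h5⟩
        exfalso
        have he : pinv w j + 1 = pinv w n := by omega
        rw [he, hwp] at h5
        omega
    · -- pinv w j ≤ pinv w n - 2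
      constructor
      · rintro ⟨-, -, h3, h4, h5⟩
        rw [remW_lt (by omega)] at h5
        refine ⟨hj1, by omega, by omega, fun hc => h4 ?_, h5⟩
        rw [mem_remD_lo (by omega) hp.2 (by omega) (by omega)]
        exact hc
      · rintro ⟨-, -, h3, h4, h5⟩
        refine ⟨hj1, hj2, by omega, fun hc => h4 ?_, ?_⟩
        · rw [mem_remD_lo (by omega) hp.2 (by omega) (by omega)] at hc; exact hc
        · rw [remW_lt (by omega)]; exact h5
  · have hB : pinv w n < pinv w j := by omega
    rw [if_neg (by omega)]
    rcases Nat.lt_or_ge (pinv w j) n with hlt | hge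
    · constructor
      · rintro ⟨-, -, h3, h4, h5⟩
        rw [remW_ge (by omega) (by omega),
          show pinv w j - 1 + 1 = pinv w j by omega] at h5
        refine ⟨hj1, by omega, hlt, fun hc => h4 ?_, h5⟩
        rw [mem_remD_hi (by omega) (by omega) (by omega),
          show pinv w j - 1 + 1 = pinv w j by omega]
        exact hc
      · rintro ⟨-, -, h3, h4, h5⟩
        refine ⟨hj1, hj2, by omega, fun hc => h4 ?_, ?_⟩
        · rw [mem_remD_hi (by omega) (by omega) (by omega),
            show pinv w j - 1 + 1 = pinv w j by omega] at hc
          exact hc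
        · rw [remW_ge (by omega) (by omega),
            show pinv w j - 1 + 1 = pinv w j by omega]
          exact h5
    · -- pinv w j = n
      constructor
      · rintro ⟨-, -, h3, h4, h5⟩
        exfalso
        omega
      · rintro ⟨-, -, h3, h4, h5⟩
        exfalso
        omega

end SB

namespace SB
open Finset

variable {n : ℕ} {w : ℕ → ℕ} {D : Finset ℕ}

theorem phiA_rem (h : IsSegPerm n w D) (hn : 2 ≤ n) {j : ℕ} (hj1 : 1 ≤ j) (hj2 : j ≤ n - 1) :
    phiA (n - 1) (remW n w) (remD n w D) j = phiA n w D j := by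
  have hp := pinv_top_mem h (by omega)
  have hq := pinv_mem h ⟨hj1, by omega⟩
  have hwq : w (pinv w j) = j := w_pinv h j
  have hwp : w (pinv w n) = n := w_pinv h n
  have hqp : pinv w j ≠ pinv w n := fun he => by rw [he, hwp] at hwq; omega
  have hp' := pinv_remW h hn hj1 hj2
  unfold phiA
  apply Finset.card_bij' (fun r _ => if r < pinv w n then r else r + 1)
    (fun q _ => if q < pinv w n then q else q - 1)
  · -- maps LHS set into RHS set
    intro r hr
    simp only [Finset.mem_filter, Finset.mem_Icc] at hr ⊢
    obtain ⟨⟨hr1, hr2⟩, hpr, hvr, hcond⟩ := hr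
    rcases Nat.lt_or_ge r (pinv w n) with hrp | hrp
    · rw [if_pos hrp]
      rw [remW_lt hrp] at hvr
      have hqlt : pinv w j < pinv w n := by
        by_contra hc
        push_neg at hc
        have : pinv w n < pinv w j := by omega
        rw [if_neg (by omega)] at hp'
        omega
      rw [if_pos hqlt] at hp'
      have hr2' : 2 ≤ r := by omega
      refine ⟨⟨hr1, by omega⟩, by omega, hvr, ?_⟩
      rcases hcond with hc | hc
      · rw [mem_remD_lo (by omega) hp.2 (by omega) (by omega)] at hc
        exact Or.inl hc
      · rw [remW_lt (by omega)] at hc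
        exact Or.inr hc
    · rw [if_neg (by omega)]
      rw [remW_ge hrp (by omega)] at hvr
      refine ⟨⟨by omega, by omega⟩, ?_, hvr, ?_⟩
      · -- pinv w j < r + 1
        rcases Nat.lt_or_ge (pinv w j) (pinv w n) with hc | hc
        · omega
        · rw [if_neg (by omega)] at hp'; omega
      · rcases Nat.eq_or_lt_of_le hrp with he | hlt
        · -- r = pinv w n : condition trivially true since w (r+1-1) = n
          refine Or.inr ?_
          rw [show r + 1 - 1 = pinv w n by omega, hwp]
          omega
        · rcases hcond with hc | hc
          · rw [mem_remD_hi (by omega) (by omega) (by omega)] at hc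
            rw [show r - 1 + 1 = r by omega] at hc
            exact Or.inl (by rw [show r + 1 - 1 = r by omega]; exact hc)
          · rw [remW_ge (by omega) (by omega), show r - 1 + 1 = r by omega] at hc
            exact Or.inr (by rw [show r + 1 - 1 = r by omega]; exact hc)
  · -- maps RHS set into LHS set
    intro a ha
    simp only [Finset.mem_filter, Finset.mem_Icc] at ha ⊢
    obtain ⟨⟨ha1, ha2⟩, hpa, hva, hcond⟩ := ha
    have hanep : a ≠ pinv w n := by
      intro he; rw [he, hwp] at hva; omega
    rcases Nat.lt_or_ge a (pinv w n) with hap | hap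
    · rw [if_pos hap]
      have hqlt : pinv w j < pinv w n := by omega
      rw [if_pos hqlt] at hp'
      refine ⟨⟨ha1, by omega⟩, by omega, by rw [remW_lt hap]; exact hva, ?_⟩
      rcases hcond with hc | hc
      · refine Or.inl ?_
        rw [mem_remD_lo (by omega) hp.2 (by omega) (by omega)]
        exact hc
      · refine Or.inr ?_
        rw [remW_lt (by omega)]
        exact hc
    · have hgt : pinv w n < a := by omega
      rw [if_neg (by omega)]
      have hrw : remW n w (a - 1) = w a := by
        rw [remW_ge (by omega) (by omega), show a - 1 + 1 = a by omega]
      refine ⟨⟨by omega, by omega⟩, ?_, by rw [hrw]; exact hva, ?_⟩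
      · rcases Nat.lt_or_ge (pinv w j) (pinv w n) with hc | hc
        · rw [if_pos hc] at hp'; omega
        · rw [if_neg (by omega)] at hp'; omega
      · rcases Nat.eq_or_lt_of_le (Nat.succ_le_of_lt hgt) with he | hlt
        · -- a = pinv w n + 1 : bar at pinv w n - 1 in remD (or p = 1 impossible)
          have hppos : 2 ≤ pinv w n := by
            by_contra hc
            push_neg at hc
            have hp1 : pinv w n = 1 := by omega
            -- then pinv w j < a = 2, pinv w j ≠ 1 : impossible
            have : pinv w j < a := hpa
            omega
          refine Or.inl ?_
          rw [show a - 1 - 1 = pinv w n - 1 by omega]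
          exact mem_remD_mid hppos (by omega)
        · rcases hcond with hc | hc
          · refine Or.inl ?_
            rw [show a - 1 - 1 = a - 2 by omega,
              mem_remD_hi (by omega) (by omega) (by omega), show a - 2 + 1 = a - 1 by omega]
            exact hc
          · refine Or.inr ?_
            rw [show a - 1 - 1 = a - 2 by omega, remW_ge (by omega) (by omega),
              show a - 2 + 1 = a - 1 by omega]
            exact hc
  · intro r hr
    simp only [Finset.mem_filter, Finset.mem_Icc] at hr
    rcases Nat.lt_or_ge r (pinv w n) with hc | hc
    · rw [if_pos hc, if_pos hc]
    · rw [if_neg (show ¬ r < pinv w n by omega), if_neg (show ¬ r + 1 < pinv w n by omega)]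
      omega
  · intro a ha
    simp only [Finset.mem_filter, Finset.mem_Icc] at ha
    have hanep : a ≠ pinv w n := by
      intro he; rw [he, hwp] at ha; omega
    rcases Nat.lt_or_ge a (pinv w n) with hc | hc
    · rw [if_pos hc, if_pos hc]
    · rw [if_neg (show ¬ a < pinv w n by omega), if_neg (show ¬ a - 1 < pinv w n by omega)]
      omega

end SB

namespace SB
open Finset

variable {n : ℕ} {w : ℕ → ℕ} {D : Finset ℕ}

/-- Insert the value `n` at position `p`. -/
noncomputable def insW (n p : ℕ) (w' : ℕ → ℕ) : ℕ → ℕ := fun q =>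
  if q < p then w' q else if q = p then n else if q ≤ n then w' (q - 1) else q

def insD (n p b g : ℕ) (D' : Finset ℕ) : Finset ℕ :=
  (Finset.Ico 1 n).filter fun j =>
    (j < p - 1 ∧ j ∈ D') ∨ (j = p - 1 ∧ b = 0) ∨ (j = p ∧ g = 0) ∨ (p + 1 ≤ j ∧ j - 1 ∈ D')

theorem phiB_top (h : IsSegPerm n w D) (hn : 1 ≤ n) :
    phiB n w D n = if 2 ≤ pinv w n ∧ pinv w n - 1 ∉ D then 1 else 0 := by
  have hp := pinv_top_mem h hn
  unfold phiB
  refine if_congr ?_ rfl rfl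
  constructor
  · rintro ⟨-, -, h3, h4, -⟩; exact ⟨h3, h4⟩
  · rintro ⟨h3, h4⟩
    refine ⟨hn, le_refl n, h3, h4, ?_⟩
    have hm := (mem_iff h (q := pinv w n - 1)).2 ⟨by omega, by omega⟩
    have hne := w_ne_top h hn (q := pinv w n - 1) (by omega)
    omega

theorem phiG_top (h : IsSegPerm n w D) (hn : 1 ≤ n) :
    phiG n w D n = if pinv w n < n ∧ pinv w n ∉ D then 1 else 0 := by
  have hp := pinv_top_mem h hn
  unfold phiG
  refine if_congr ?_ rfl rfl
  constructor
  · rintro ⟨-, -, h3, h4, -⟩; exact ⟨h3, h4⟩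
  · rintro ⟨h3, h4⟩
    refine ⟨hn, le_refl n, h3, h4, ?_⟩
    have hm := (mem_iff h (q := pinv w n + 1)).2 ⟨by omega, by omega⟩
    have hne := w_ne_top h hn (q := pinv w n + 1) (by omega)
    omega

theorem phiA_top (h : IsSegPerm n w D) (hn : 1 ≤ n) :
    phiA n w D n = (D.filter fun d => pinv w n ≤ d).card := by
  have hp := pinv_top_mem h hn
  unfold phiA
  apply Finset.card_bij (fun q _ => q - 1)
  · intro q hq
    simp only [Finset.mem_filter, Finset.mem_Icc] at hq ⊢
    obtain ⟨⟨h1, h2⟩, h3, h4, h5⟩ := hq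
    rcases h5 with h5 | h5
    · exact ⟨h5, by omega⟩
    · exfalso
      have hm := (mem_iff h (q := q - 1)).2 ⟨by omega, by omega⟩
      omega
  · intro q1 h1 q2 h2 he
    simp only [Finset.mem_filter, Finset.mem_Icc] at h1 h2
    omega
  · intro d hd
    simp only [Finset.mem_filter] at hd
    have hdm := h.2.2 hd.1
    rw [Finset.mem_Ico] at hdm
    refine ⟨d + 1, ?_, by omega⟩
    simp only [Finset.mem_filter, Finset.mem_Icc, Nat.add_sub_cancel]
    have hne := w_ne_top h hn (q := d + 1) (by omega)
    have hm := (mem_iff h (q := d + 1)).2 ⟨by omega, by omega⟩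
    exact ⟨⟨by omega, by omega⟩, by omega, by omega, Or.inl hd.1⟩

theorem recon_w (h : IsSegPerm n w D) (hn : 1 ≤ n) :
    insW n (pinv w n) (remW n w) = w := by
  have hp := pinv_top_mem h hn
  have hwp : w (pinv w n) = n := w_pinv h n
  funext q
  unfold insW
  rcases Nat.lt_or_ge q (pinv w n) with hc | hc
  · rw [if_pos hc, remW_lt hc]
  · rcases Nat.eq_or_lt_of_le hc with he | hgt
    · rw [if_neg (by omega), if_pos he.symm, ← he, hwp]
    · rw [if_neg (by omega), if_neg (by omega)]
      rcases Nat.lt_or_ge n q with hq | hq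
      · rw [if_neg (by omega)]
        exact (h.2.1 q (by rw [Set.mem_Icc]; omega)).symm
      · rw [if_pos hq, remW_ge (by omega) (by omega), show q - 1 + 1 = q by omega]

theorem recon_D (h : IsSegPerm n w D) (hn : 1 ≤ n) :
    insD n (pinv w n) (phiB n w D n) (phiG n w D n) (remD n w D) = D := by
  have hp := pinv_top_mem h hn
  have hB := phiB_top h hn
  have hG := phiG_top h hn
  ext j
  rw [insD, Finset.mem_filter, Finset.mem_Ico]
  constructor
  · rintro ⟨⟨hj1, hjn⟩, hc | hc | hc | hc⟩
    · rw [mem_remD] at hc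
      rcases hc.2.2 with hd | hd | hd
      · exact hd.2
      · omega
      · omega
    · -- j = p - 1 and b = 0
      rw [hB] at hc
      rcases hc with ⟨rfl, hb⟩
      split at hb
      · omega
      · rename_i hcc
        push_neg at hcc
        rcases Nat.lt_or_ge (pinv w n) 2 with h2 | h2
        · omega
        · simpa using hcc h2
    · rw [hG] at hc
      rcases hc with ⟨rfl, hg⟩
      split at hg
      · omega
      · rename_i hcc
        push_neg at hcc
        exact by simpa using hcc (by omega)
    · rcases hc with ⟨hpj, hj'⟩
      rw [mem_remD] at hj'
      rcases hj'.2 with hd | hd | hd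
      · omega
      · omega
      · rw [show j - 1 + 1 = j by omega] at hd
        exact hd.2
  · intro hj
    have hjm := h.2.2 hj
    rw [Finset.mem_Ico] at hjm
    refine ⟨⟨hjm.1, hjm.2⟩, ?_⟩
    rcases Nat.lt_or_ge j (pinv w n - 1) with hc | hc
    · refine Or.inl ⟨hc, ?_⟩
      rw [mem_remD_lo (by omega) hp.2 (by omega) (by omega)]
      exact hj
    · rcases Nat.eq_or_lt_of_le hc with he | hgt
      · refine Or.inr (Or.inl ⟨he.symm, ?_⟩)
        rw [hB]
        rw [if_neg]
        intro hcc
        exact hcc.2 (show pinv w n - 1 ∈ D by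
          rw [show pinv w n - 1 = j from he]; exact hj)
      · rcases Nat.eq_or_lt_of_le (show pinv w n ≤ j by omega) with he2 | hgt2
        · refine Or.inr (Or.inr (Or.inl ⟨he2.symm, ?_⟩))
          rw [hG]
          rw [if_neg]
          intro hcc
          exact hcc.2 (show pinv w n ∈ D by rw [he2]; exact hj)
        · refine Or.inr (Or.inr (Or.inr ⟨by omega, ?_⟩))
          rw [mem_remD_hi (by omega) (by omega) (by omega), show j - 1 + 1 = j by omega]
          exact hj

theorem slot_rem (h : IsSegPerm n w D) (hn : 1 ≤ n) :
    pinv w n = 1 ∨ pinv w n = n ∨ pinv w n - 1 ∈ remD n w D := by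
  have hp := pinv_top_mem h hn
  rcases Nat.eq_or_lt_of_le hp.1 with h1 | h2
  · exact Or.inl h1.symm
  · rcases Nat.eq_or_lt_of_le hp.2 with h3 | h4
    · exact Or.inr (Or.inl h3)
    · exact Or.inr (Or.inr (mem_remD_mid (by omega) (by omega)))

theorem phiA_top_eq (h : IsSegPerm n w D) (hn : 1 ≤ n) :
    phiA n w D n = (if phiG n w D n = 0 ∧ pinv w n < n then 1 else 0) +
      ((remD n w D).filter fun d => pinv w n ≤ d).card := by
  have hp := pinv_top_mem h hn
  have hG := phiG_top h hn
  rw [phiA_top h hn]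
  have hsplit : D.filter (fun d => pinv w n ≤ d) =
      (D.filter fun d => pinv w n + 1 ≤ d) ∪ (D.filter fun d => d = pinv w n) := by
    ext d
    simp only [Finset.mem_union, Finset.mem_filter]
    constructor
    · rintro ⟨hd, hc⟩
      rcases Nat.eq_or_lt_of_le hc with he | hgt
      · exact Or.inr ⟨hd, he.symm⟩
      · exact Or.inl ⟨hd, hgt⟩
    · rintro (⟨hd, hc⟩ | ⟨hd, hc⟩)
      · exact ⟨hd, by omega⟩
      · exact ⟨hd, by omega⟩
  rw [hsplit, Finset.card_union_of_disjoint (by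
    rw [Finset.disjoint_filter]
    intro d _ hd
    omega)]
  have h1 : (D.filter fun d => d = pinv w n).card = if phiG n w D n = 0 ∧ pinv w n < n
      then 1 else 0 := by
    rw [hG]
    by_cases hin : pinv w n ∈ D
    · have hm := h.2.2 hin
      rw [Finset.mem_Ico] at hm
      rw [Finset.filter_eq', if_pos hin, if_pos]
      · simp
      · constructor
        · rw [if_neg]; intro hcc; exact hcc.2 hin
        · exact hm.2
    · rw [Finset.filter_eq', if_neg hin]
      simp only [Finset.card_empty]
      by_cases hpn : pinv w n < n
      · rw [if_neg]
        intro hcc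
        rw [if_pos ⟨hpn, hin⟩] at hcc
        omega
      · rw [if_neg]; intro hcc; exact hpn hcc.2
  have h2 : (D.filter fun d => pinv w n + 1 ≤ d).card =
      ((remD n w D).filter fun d => pinv w n ≤ d).card := by
    apply Finset.card_bij (fun d _ => d - 1)
    · intro d hd
      simp only [Finset.mem_filter] at hd ⊢
      have hm := h.2.2 hd.1
      rw [Finset.mem_Ico] at hm
      refine ⟨?_, by omega⟩
      rw [mem_remD_hi (by omega) (by omega) (by omega), show d - 1 + 1 = d by omega]
      exact hd.1
    · intro d1 h1 d2 h2 he
      simp only [Finset.mem_filter] at h1 h2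
      omega
    · intro e he
      simp only [Finset.mem_filter] at he
      obtain ⟨hee, hpe⟩ := he
      have heb := (mem_remD.1 hee).1
      rw [mem_remD_hi (by omega) (by omega) (by omega)] at hee
      exact ⟨e + 1, by simp only [Finset.mem_filter]; exact ⟨hee, by omega⟩, by omega⟩
  rw [h1, h2, Nat.add_comm]

theorem pos_unique {m : ℕ} {E : Finset ℕ} (hE : ∀ d ∈ E, 1 ≤ d ∧ d < m - 1) {g : ℕ}
    {p1 p2 : ℕ} (hp1 : 1 ≤ p1 ∧ p1 ≤ m) (hp2 : 1 ≤ p2 ∧ p2 ≤ m)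
    (hs1 : p1 = 1 ∨ p1 = m ∨ p1 - 1 ∈ E) (hs2 : p2 = 1 ∨ p2 = m ∨ p2 - 1 ∈ E)
    (hg1 : g = 0 ∨ p1 < m) (hg2 : g = 0 ∨ p2 < m)
    (hf : (if g = 0 ∧ p1 < m then 1 else 0) + (E.filter fun d => p1 ≤ d).card =
          (if g = 0 ∧ p2 < m then 1 else 0) + (E.filter fun d => p2 ≤ d).card) :
    p1 = p2 := by
  have key : ∀ q1 q2 : ℕ, 1 ≤ q1 → q2 ≤ m → q1 < q2 →
      (q2 = 1 ∨ q2 = m ∨ q2 - 1 ∈ E) → (g = 0 ∨ q1 < m) → (g = 0 ∨ q2 < m) →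
      (if g = 0 ∧ q2 < m then 1 else 0) + (E.filter fun d => q2 ≤ d).card <
      (if g = 0 ∧ q1 < m then 1 else 0) + (E.filter fun d => q1 ≤ d).card := by
    intro q1 q2 hq1 hq2 hlt hs hgg1 hgg2
    rcases hs with h1 | h2 | hs
    · omega
    · have hg0 : g = 0 := by rcases hgg2 with h | h <;> omega
      have hc2 : (E.filter fun d => q2 ≤ d).card = 0 := by
        rw [Finset.card_eq_zero, Finset.filter_eq_empty_iff]
        intro d hd
        have := hE d hd
        omega
      rw [hc2, if_neg (by omega), if_pos ⟨hg0, by omega⟩]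
      omega
    · -- q2 - 1 ∈ E
      have hq22 : 2 ≤ q2 := by omega
      have hcard : (E.filter fun d => q2 ≤ d).card + 1 ≤ (E.filter fun d => q1 ≤ d).card := by
        have hsub : insert (q2 - 1) (E.filter fun d => q2 ≤ d) ⊆
            E.filter fun d => q1 ≤ d := by
          intro d hd
          rcases Finset.mem_insert.1 hd with rfl | hd
          · simp only [Finset.mem_filter]
            exact ⟨hs, by omega⟩
          · simp only [Finset.mem_filter] at hd ⊢
            exact ⟨hd.1, by omega⟩
        have := Finset.card_le_card hsub
        rw [Finset.card_insert_of_notMem (by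
          simp only [Finset.mem_filter]
          intro hcc
          omega)] at this
        exact this
      have hind : (if g = 0 ∧ q2 < m then 1 else 0) ≤ (if g = 0 ∧ q1 < m then 1 else 0) := by
        split
        · rename_i hcc
          rw [if_pos ⟨hcc.1, by omega⟩]
        · omega
      omega
  rcases Nat.lt_trichotomy p1 p2 with hlt | he | hgt
  · have := key p1 p2 hp1.1 hp2.2 hlt hs2 hg1 hg2
    omega
  · exact he
  · have := key p2 p1 hp2.1 hp1.2 hgt hs1 hg2 hg1
    omega

end SB

namespace SB
open Finset

variable {n : ℕ} {w : ℕ → ℕ} {D : Finset ℕ}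

theorem segperm_one {w : ℕ → ℕ} {D : Finset ℕ} (h : IsSegPerm 1 w D) :
    w = (fun q => q) ∧ D = ∅ := by
  constructor
  · funext q
    by_cases hq : q ∈ Set.Icc 1 1
    · have h1 := h.1.mapsTo hq
      rw [Set.mem_Icc] at hq h1
      omega
    · exact h.2.1 q hq
  · have := h.2.2
    simpa using this

theorem inj_step {w1 w2 : ℕ → ℕ} {D1 D2 : Finset ℕ} (h1 : IsSegPerm n w1 D1)
    (h2 : IsSegPerm n w2 D2) (hn : 1 ≤ n)
    (hrW : remW n w1 = remW n w2) (hrD : remD n w1 D1 = remD n w2 D2)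
    (hA : phiA n w1 D1 n = phiA n w2 D2 n) (hB : phiB n w1 D1 n = phiB n w2 D2 n)
    (hG : phiG n w1 D1 n = phiG n w2 D2 n) : w1 = w2 ∧ D1 = D2 := by
  have hp1 := pinv_top_mem h1 hn
  have hp2 := pinv_top_mem h2 hn
  have hE : ∀ d ∈ remD n w1 D1, 1 ≤ d ∧ d < n - 1 := by
    intro d hd
    exact (mem_remD.1 hd).1
  have hgc1 : phiG n w1 D1 n = 0 ∨ pinv w1 n < n := by
    rw [phiG_top h1 hn]
    split
    · rename_i hc; exact Or.inr hc.1
    · exact Or.inl rfl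
  have hgc2 : phiG n w1 D1 n = 0 ∨ pinv w2 n < n := by
    rw [hG, phiG_top h2 hn]
    split
    · rename_i hc; exact Or.inr hc.1
    · exact Or.inl rfl
  have hf1 := phiA_top_eq h1 hn
  have hf2 := phiA_top_eq h2 hn
  rw [← hrD, ← hG] at hf2
  have hpe : pinv w1 n = pinv w2 n := by
    apply pos_unique hE hp1 hp2 (slot_rem h1 hn) (by rw [hrD]; exact slot_rem h2 hn) hgc1 hgc2
    rw [← hf1, ← hf2, hA]
  constructor
  · calc w1 = insW n (pinv w1 n) (remW n w1) := (recon_w h1 hn).symm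
      _ = insW n (pinv w2 n) (remW n w2) := by rw [hpe, hrW]
      _ = w2 := recon_w h2 hn
  · calc D1 = insD n (pinv w1 n) (phiB n w1 D1 n) (phiG n w1 D1 n) (remD n w1 D1) :=
        (recon_D h1 hn).symm
      _ = insD n (pinv w2 n) (phiB n w2 D2 n) (phiG n w2 D2 n) (remD n w2 D2) := by
        rw [hpe, hrD, hB, hG]
      _ = D2 := recon_D h2 hn

theorem phi_inj : ∀ n, 1 ≤ n → ∀ w1 D1 w2 D2, IsSegPerm n w1 D1 → IsSegPerm n w2 D2 →
    (∀ j, phiA n w1 D1 j = phiA n w2 D2 j) → (∀ j, phiB n w1 D1 j = phiB n w2 D2 j) →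
    (∀ j, phiG n w1 D1 j = phiG n w2 D2 j) → w1 = w2 ∧ D1 = D2 := by
  intro n hn
  induction n, hn using Nat.le_induction with
  | base =>
    intro w1 D1 w2 D2 h1 h2 _ _ _
    obtain ⟨hw1, hD1⟩ := segperm_one h1
    obtain ⟨hw2, hD2⟩ := segperm_one h2
    rw [hw1, hw2, hD1, hD2]
    exact ⟨rfl, rfl⟩
  | succ n hn ih =>
    intro w1 D1 w2 D2 h1 h2 hA hB hG
    have h1' : IsSegPerm n (remW (n+1) w1) (remD (n+1) w1 D1) := by
      have := rem_isSegPerm h1 (by omega); simpa using this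
    have h2' : IsSegPerm n (remW (n+1) w2) (remD (n+1) w2 D2) := by
      have := rem_isSegPerm h2 (by omega); simpa using this
    have hrec := ih (remW (n+1) w1) (remD (n+1) w1 D1) (remW (n+1) w2) (remD (n+1) w2 D2)
      h1' h2' ?_ ?_ ?_
    · exact inj_step h1 h2 (by omega) hrec.1 hrec.2 (hA (n+1)) (hB (n+1)) (hG (n+1))
    · intro j
      by_cases hj : j ∈ Finset.Icc 1 n
      · rw [Finset.mem_Icc] at hj
        have e1 := phiA_rem h1 (show 2 ≤ n + 1 by omega) (j := j) hj.1 (by simpa using hj.2)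
        have e2 := phiA_rem h2 (show 2 ≤ n + 1 by omega) (j := j) hj.1 (by simpa using hj.2)
        simp only [Nat.add_sub_cancel] at e1 e2
        rw [e1, e2, hA j]
      · rw [phiA_out h1' hj, phiA_out h2' hj]
    · intro j
      by_cases hj : j ∈ Finset.Icc 1 n
      · rw [Finset.mem_Icc] at hj
        have e1 := phiB_rem h1 (show 2 ≤ n + 1 by omega) (j := j) hj.1 (by simpa using hj.2)
        have e2 := phiB_rem h2 (show 2 ≤ n + 1 by omega) (j := j) hj.1 (by simpa using hj.2)
        simp only [Nat.add_sub_cancel] at e1 e2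
        rw [e1, e2, hB j]
      · rw [phiB_out hj, phiB_out hj]
    · intro j
      by_cases hj : j ∈ Finset.Icc 1 n
      · rw [Finset.mem_Icc] at hj
        have e1 := phiG_rem h1 (show 2 ≤ n + 1 by omega) (j := j) hj.1 (by simpa using hj.2)
        have e2 := phiG_rem h2 (show 2 ≤ n + 1 by omega) (j := j) hj.1 (by simpa using hj.2)
        simp only [Nat.add_sub_cancel] at e1 e2
        rw [e1, e2, hG j]
      · rw [phiG_out hj, phiG_out hj]

end SB

namespace SB
open Finset

variable {n : ℕ} {w : ℕ → ℕ} {D : Finset ℕ}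

theorem nth_largest : ∀ (r : ℕ) (F : Finset ℕ), r < F.card →
    ∃ d ∈ F, (F.filter fun e => d < e).card = r := by
  intro r
  induction r with
  | zero =>
    intro F hF
    have hne : F.Nonempty := Finset.card_pos.1 (by omega)
    refine ⟨F.max' hne, Finset.max'_mem F hne, ?_⟩
    rw [Finset.card_eq_zero, Finset.filter_eq_empty_iff]
    intro e he
    have := Finset.le_max' F e he
    omega
  | succ r ih =>
    intro F hF
    have hne : F.Nonempty := Finset.card_pos.1 (by omega)
    set M := F.max' hne with hM
    have hMF : M ∈ F := Finset.max'_mem F hne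
    have hcard : r < (F.erase M).card := by
      rw [Finset.card_erase_of_mem hMF]
      omega
    obtain ⟨d, hd, hdc⟩ := ih (F.erase M) hcard
    have hdF : d ∈ F := Finset.mem_of_mem_erase hd
    have hdM : d < M := by
      have hle := Finset.le_max' F d hdF
      have hne' : d ≠ M := Finset.ne_of_mem_erase hd
      omega
    refine ⟨d, hdF, ?_⟩
    have he : F.filter (fun e => d < e) = insert M ((F.erase M).filter fun e => d < e) := by
      ext e
      simp only [Finset.mem_insert, Finset.mem_filter, Finset.mem_erase]
      constructor
      · rintro ⟨heF, hde⟩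
        by_cases heM : e = M
        · exact Or.inl heM
        · exact Or.inr ⟨⟨heM, heF⟩, hde⟩
      · rintro (rfl | ⟨⟨-, heF⟩, hde⟩)
        · exact ⟨hMF, hdM⟩
        · exact ⟨heF, hde⟩
    rw [he, Finset.card_insert_of_notMem (by
      simp only [Finset.mem_filter, Finset.mem_erase]
      rintro ⟨⟨hne', -⟩, -⟩
      exact hne' rfl)]
    omega

theorem pos_exists {D' : Finset ℕ} (hD' : D' ⊆ Finset.Ico 1 (n - 1)) (hn : 2 ≤ n)
    {a b g : ℕ} (hb : b ≤ 1) (hg : g ≤ 1) (hval : a + b + g ≤ D'.card + 1) :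
    ∃ p, (1 ≤ p ∧ p ≤ n) ∧ (p = 1 ∨ p = n ∨ p - 1 ∈ D') ∧ (b = 1 → 2 ≤ p) ∧
      (g = 1 → p < n) ∧
      (if g = 0 ∧ p < n then 1 else 0) + (D'.filter fun d => p ≤ d).card = a := by
  have hDb : ∀ d ∈ D', 1 ≤ d ∧ d < n - 1 := by
    intro d hd
    have := hD' hd
    rwa [Finset.mem_Ico] at this
  rcases Nat.eq_zero_or_pos a with rfl | ha
  · rcases Nat.eq_zero_or_pos g with hg0 | hg1
    · refine ⟨n, ⟨by omega, le_refl n⟩, Or.inr (Or.inl rfl), fun _ => by omega,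
        fun hc => by omega, ?_⟩
      rw [if_neg (by omega), Nat.zero_add]
      rw [Finset.card_eq_zero, Finset.filter_eq_empty_iff]
      intro d hd
      have := hDb d hd
      omega
    · have hg1' : g = 1 := by omega
      rcases Finset.eq_empty_or_nonempty D' with rfl | hne
      · have hb0 : b = 0 := by rw [Finset.card_empty] at hval; omega
        refine ⟨1, ⟨le_refl 1, by omega⟩, Or.inl rfl, fun hc => by omega,
          fun _ => by omega, ?_⟩
        rw [if_neg (by omega)]
        simp
      · set M := D'.max' hne with hM
        have hMD := Finset.max'_mem D' hne
        have hMb := hDb M hMD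
        refine ⟨M + 1, ⟨by omega, by omega⟩, Or.inr (Or.inr (by simpa using hMD)),
          fun _ => by omega, fun _ => by omega, ?_⟩
        rw [if_neg (by omega), Nat.zero_add]
        rw [Finset.card_eq_zero, Finset.filter_eq_empty_iff]
        intro d hd
        have := Finset.le_max' D' d hd
        omega
  · set r := a + g - 1 with hr
    rcases Nat.lt_or_ge r D'.card with hlt | hge
    · obtain ⟨d, hd, hdc⟩ := nth_largest r D' hlt
      have hdb := hDb d hd
      refine ⟨d + 1, ⟨by omega, by omega⟩, Or.inr (Or.inr (by simpa using hd)),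
        fun _ => by omega, fun _ => by omega, ?_⟩
      have hfe : D'.filter (fun e => d + 1 ≤ e) = D'.filter fun e => d < e := by
        apply Finset.filter_congr
        intro e _
        omega
      rw [hfe, hdc]
      rcases Nat.eq_zero_or_pos g with hg0 | hgp
      · rw [if_pos ⟨hg0, by omega⟩]
        omega
      · rw [if_neg (by omega)]
        omega
    · -- r = D'.card, p = 1, b = 0
      have hreq : r = D'.card := by omega
      have hb0 : b = 0 := by omega
      refine ⟨1, ⟨le_refl 1, by omega⟩, Or.inl rfl, fun hc => by omega,
        fun _ => by omega, ?_⟩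
      have hfe : D'.filter (fun e => 1 ≤ e) = D' := by
        apply Finset.filter_true_of_mem
        intro e he
        exact (hDb e he).1
      rw [hfe]
      rcases Nat.eq_zero_or_pos g with hg0 | hgp
      · rw [if_pos ⟨hg0, by omega⟩]
        omega
      · rw [if_neg (by omega)]
        omega

end SB

namespace SB
open Finset

variable {n : ℕ} {w : ℕ → ℕ} {D : Finset ℕ}

theorem mem_insD {p b g : ℕ} {D' : Finset ℕ} {j : ℕ} :
    j ∈ insD n p b g D' ↔ (1 ≤ j ∧ j < n) ∧
      ((j < p - 1 ∧ j ∈ D') ∨ (j = p - 1 ∧ b = 0) ∨ (j = p ∧ g = 0) ∨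
        (p + 1 ≤ j ∧ j - 1 ∈ D')) := by
  rw [insD, Finset.mem_filter, Finset.mem_Ico]

theorem insW_lt {p : ℕ} {w' : ℕ → ℕ} {q : ℕ} (h : q < p) : insW n p w' q = w' q := by
  rw [insW, if_pos h]

theorem insW_self {p : ℕ} {w' : ℕ → ℕ} : insW n p w' p = n := by
  rw [insW, if_neg (lt_irrefl p), if_pos rfl]

theorem insW_gt {p : ℕ} {w' : ℕ → ℕ} {q : ℕ} (h : p < q) (hq : q ≤ n) :
    insW n p w' q = w' (q - 1) := by
  rw [insW, if_neg (by omega), if_neg (by omega), if_pos hq]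

theorem ins_isSegPerm {p b g : ℕ} {w' : ℕ → ℕ} {D' : Finset ℕ}
    (h' : IsSegPerm (n - 1) w' D') (hn : 2 ≤ n) (hp1 : 1 ≤ p) (hpn : p ≤ n) :
    IsSegPerm n (insW n p w') (insD n p b g D') := by
  have hw'r : ∀ q, 1 ≤ q → q ≤ n - 1 → 1 ≤ w' q ∧ w' q ≤ n - 1 := by
    intro q h1 h2
    exact (mem_iff h').2 ⟨h1, h2⟩
  refine ⟨⟨?_, ?_, ?_⟩, ?_, ?_⟩
  · intro q hq
    rw [Set.mem_Icc] at hq ⊢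
    rcases Nat.lt_trichotomy q p with hc | hc | hc
    · rw [insW_lt hc]
      have := hw'r q hq.1 (by omega)
      omega
    · rw [hc, insW_self]; omega
    · rw [insW_gt hc hq.2]
      have := hw'r (q - 1) (by omega) (by omega)
      omega
  · intro q1 hq1 q2 hq2 he
    rw [Set.mem_Icc] at hq1 hq2
    by_cases he1 : q1 = p <;> by_cases he2 : q2 = p
    · omega
    · exfalso
      rw [he1, insW_self] at he
      rcases Nat.lt_trichotomy q2 p with hc | hc | hc
      · rw [insW_lt hc] at he
        have := hw'r q2 hq2.1 (by omega)
        omega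
      · omega
      · rw [insW_gt hc hq2.2] at he
        have := hw'r (q2 - 1) (by omega) (by omega)
        omega
    · exfalso
      rw [he2, insW_self] at he
      rcases Nat.lt_trichotomy q1 p with hc | hc | hc
      · rw [insW_lt hc] at he
        have := hw'r q1 hq1.1 (by omega)
        omega
      · omega
      · rw [insW_gt hc hq1.2] at he
        have := hw'r (q1 - 1) (by omega) (by omega)
        omega
    · have e1 : insW n p w' q1 = w' (if q1 < p then q1 else q1 - 1) := by
        rcases Nat.lt_trichotomy q1 p with hc | hc | hc
        · rw [insW_lt hc, if_pos hc]
        · omega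
        · rw [insW_gt hc hq1.2, if_neg (by omega)]
      have e2 : insW n p w' q2 = w' (if q2 < p then q2 else q2 - 1) := by
        rcases Nat.lt_trichotomy q2 p with hc | hc | hc
        · rw [insW_lt hc, if_pos hc]
        · omega
        · rw [insW_gt hc hq2.2, if_neg (by omega)]
      rw [e1, e2] at he
      have := (bij h').1 he
      split at this <;> split at this <;> omega
  · intro y hy
    rw [Set.mem_Icc] at hy
    rcases Nat.eq_or_lt_of_le hy.2 with he | hlt
    · exact ⟨p, Set.mem_Icc.2 ⟨hp1, hpn⟩, by rw [insW_self]; omega⟩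
    · set q' := pinv w' y with hq'
      have hq'm := pinv_mem h' ⟨hy.1, by omega⟩
      have hwq' : w' q' = y := w_pinv h' y
      rcases Nat.lt_or_ge q' p with hc | hc
      · exact ⟨q', Set.mem_Icc.2 ⟨hq'm.1, by omega⟩, by rw [insW_lt hc, hwq']⟩
      · refine ⟨q' + 1, Set.mem_Icc.2 ⟨by omega, by omega⟩, ?_⟩
        rw [insW_gt (by omega) (by omega), Nat.add_sub_cancel, hwq']
  · intro q hq
    rw [Set.mem_Icc] at hq
    rcases Nat.lt_or_ge q 1 with hc | hc
    · have hq0 : q = 0 := by omega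
      rw [hq0, insW_lt (by omega)]
      exact h'.2.1 0 (by rw [Set.mem_Icc]; omega)
    · have hqn : n < q := by omega
      rw [insW, if_neg (by omega), if_neg (by omega), if_neg (by omega)]
  · intro j hj
    rw [insD, Finset.mem_filter] at hj
    exact hj.1

theorem pinv_insW {p : ℕ} {w' : ℕ → ℕ} {D' : Finset ℕ} {b g : ℕ}
    (h' : IsSegPerm (n - 1) w' D') (hn : 2 ≤ n) (hp1 : 1 ≤ p) (hpn : p ≤ n) :
    pinv (insW n p w') n = p := by
  have hIns := ins_isSegPerm (b := b) (g := g) h' hn hp1 hpn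
  have e := pinv_w hIns p
  rwa [insW_self] at e

theorem ins_remW {p : ℕ} {w' : ℕ → ℕ} {D' : Finset ℕ} {b g : ℕ}
    (h' : IsSegPerm (n - 1) w' D') (hn : 2 ≤ n) (hp1 : 1 ≤ p) (hpn : p ≤ n) :
    remW n (insW n p w') = w' := by
  have hpi := pinv_insW (D' := D') (b := b) (g := g) h' hn hp1 hpn
  funext q
  rw [remW, hpi]
  rcases Nat.lt_or_ge q p with hc | hc
  · rw [if_pos hc, insW_lt hc]
  · rw [if_neg (by omega)]
    rcases Nat.lt_or_ge (n - 1) q with hc2 | hc2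
    · rw [if_neg (by omega)]
      exact (h'.2.1 q (by rw [Set.mem_Icc]; omega)).symm
    · rw [if_pos (by omega), insW_gt (by omega) (by omega), Nat.add_sub_cancel]

theorem ins_remD {p : ℕ} {w' : ℕ → ℕ} {D' : Finset ℕ} {b g : ℕ}
    (h' : IsSegPerm (n - 1) w' D') (hn : 2 ≤ n) (hp1 : 1 ≤ p) (hpn : p ≤ n)
    (hslot : p = 1 ∨ p = n ∨ p - 1 ∈ D') :
    remD n (insW n p w') (insD n p b g D') = D' := by
  have hpi := pinv_insW (D' := D') (b := b) (g := g) h' hn hp1 hpn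
  have hD'b : ∀ d ∈ D', 1 ≤ d ∧ d < n - 1 := by
    intro d hd
    have := h'.2.2 hd
    rwa [Finset.mem_Ico] at this
  ext j
  rw [mem_remD, hpi]
  constructor
  · rintro ⟨⟨hj1, hjn⟩, hc | hc | hc⟩
    · rw [mem_insD] at hc
      rcases hc.2.2 with hd | hd | hd | hd
      · exact hd.2
      · omega
      · omega
      · omega
    · -- j = p - 1, so p - 1 ∈ D' via slot
      rcases hslot with hs | hs | hs
      · omega
      · omega
      · rw [hc]; exact hs
    · rcases hc with ⟨hpj, hj'⟩
      rw [mem_insD] at hj'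
      rcases hj'.2 with hd | hd | hd | hd
      · omega
      · omega
      · omega
      · rw [Nat.add_sub_cancel] at hd
        exact hd.2
  · intro hj
    have hjb := hD'b j hj
    refine ⟨⟨hjb.1, hjb.2⟩, ?_⟩
    rcases Nat.lt_trichotomy j (p - 1) with hc | hc | hc
    · exact Or.inl ⟨hc, mem_insD.2 ⟨⟨hjb.1, by omega⟩, Or.inl ⟨hc, hj⟩⟩⟩
    · exact Or.inr (Or.inl hc)
    · refine Or.inr (Or.inr ⟨by omega, ?_⟩)
      rw [mem_insD]
      exact ⟨⟨by omega, by omega⟩, Or.inr (Or.inr (Or.inr ⟨by omega,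
        by rw [Nat.add_sub_cancel]; exact hj⟩))⟩

theorem ins_phiB {p : ℕ} {w' : ℕ → ℕ} {D' : Finset ℕ} {b g : ℕ}
    (h' : IsSegPerm (n - 1) w' D') (hn : 2 ≤ n) (hp1 : 1 ≤ p) (hpn : p ≤ n)
    (hb : b ≤ 1) (hbp : b = 1 → 2 ≤ p) :
    phiB n (insW n p w') (insD n p b g D') n = b := by
  have hIns := ins_isSegPerm (b := b) (g := g) h' hn hp1 hpn
  have hpi := pinv_insW (D' := D') (b := b) (g := g) h' hn hp1 hpn
  rw [phiB_top hIns (by omega), hpi]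
  have hmem : p - 1 ∈ insD n p b g D' ↔ 2 ≤ p ∧ b = 0 := by
    rw [mem_insD]
    constructor
    · rintro ⟨⟨h1, h2⟩, hc | hc | hc | hc⟩
      · omega
      · exact ⟨by omega, hc.2⟩
      · omega
      · omega
    · rintro ⟨h1, h2⟩
      exact ⟨⟨by omega, by omega⟩, Or.inr (Or.inl ⟨rfl, h2⟩)⟩
  rcases Nat.eq_zero_or_pos b with hb0 | hb1
  · rw [if_neg]
    · omega
    · intro hc
      rw [hmem] at hc
      omega
  · have hb1' : b = 1 := by omega
    rw [if_pos]
    · omega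
    · refine ⟨hbp hb1', fun hc => ?_⟩
      rw [hmem] at hc
      omega

theorem ins_phiG {p : ℕ} {w' : ℕ → ℕ} {D' : Finset ℕ} {b g : ℕ}
    (h' : IsSegPerm (n - 1) w' D') (hn : 2 ≤ n) (hp1 : 1 ≤ p) (hpn : p ≤ n)
    (hg : g ≤ 1) (hgp : g = 1 → p < n) :
    phiG n (insW n p w') (insD n p b g D') n = g := by
  have hIns := ins_isSegPerm (b := b) (g := g) h' hn hp1 hpn
  have hpi := pinv_insW (D' := D') (b := b) (g := g) h' hn hp1 hpn
  rw [phiG_top hIns (by omega), hpi]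
  have hmem : p ∈ insD n p b g D' ↔ p < n ∧ g = 0 := by
    rw [mem_insD]
    constructor
    · rintro ⟨⟨h1, h2⟩, hc | hc | hc | hc⟩
      · omega
      · omega
      · exact ⟨h2, hc.2⟩
      · omega
    · rintro ⟨h1, h2⟩
      exact ⟨⟨by omega, h1⟩, Or.inr (Or.inr (Or.inl ⟨rfl, h2⟩))⟩
  rcases Nat.eq_zero_or_pos g with hg0 | hg1
  · rw [if_neg]
    · omega
    · intro hc
      rw [hmem] at hc
      omega
  · have hg1' : g = 1 := by omega
    rw [if_pos]
    · omega
    · exact ⟨hgp hg1', fun hc => by rw [hmem] at hc; omega⟩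

theorem ins_phiA {p : ℕ} {w' : ℕ → ℕ} {D' : Finset ℕ} {a b g : ℕ}
    (h' : IsSegPerm (n - 1) w' D') (hn : 2 ≤ n) (hp1 : 1 ≤ p) (hpn : p ≤ n)
    (hb : b ≤ 1) (hbp : b = 1 → 2 ≤ p) (hg : g ≤ 1) (hgp : g = 1 → p < n)
    (hslot : p = 1 ∨ p = n ∨ p - 1 ∈ D')
    (hcnt : (if g = 0 ∧ p < n then 1 else 0) + (D'.filter fun d => p ≤ d).card = a) :
    phiA n (insW n p w') (insD n p b g D') n = a := by
  have hIns := ins_isSegPerm (b := b) (g := g) h' hn hp1 hpn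
  have hpi := pinv_insW (D' := D') (b := b) (g := g) h' hn hp1 hpn
  have hG := ins_phiG h' hn hp1 hpn hg hgp (b := b)
  rw [phiA_top_eq hIns (by omega), hpi, hG,
    ins_remD (b := b) (g := g) h' hn hp1 hpn hslot]
  exact hcnt

end SB

namespace SB
open Finset

theorem phi_surj : ∀ n, 1 ≤ n → ∀ t1 t2 t3 : ℕ → ℕ, IsDatum n t1 t2 t3 →
    ∃ w D, IsSegPerm n w D ∧ (∀ j, phiA n w D j = t1 j) ∧
      (∀ j, phiB n w D j = t2 j) ∧ (∀ j, phiG n w D j = t3 j) := by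
  intro n hn
  induction n, hn using Nat.le_induction with
  | base =>
    intro t1 t2 t3 ht
    have hseg : IsSegPerm 1 (fun q => q) ∅ := by
      refine ⟨⟨fun x hx => hx, fun a _ b _ h => h, fun y hy => ⟨y, hy, rfl⟩⟩,
        fun m _ => rfl, by simp⟩
    have hzero : t1 1 = 0 ∧ t2 1 = 0 ∧ t3 1 = 0 := by
      have h1 := ht.2.2 1 (by simp)
      rw [Finset.Icc_self, Finset.sum_singleton] at h1
      omega
    have hout : ∀ j, j ≠ 1 → t1 j = 0 ∧ t2 j = 0 ∧ t3 j = 0 := by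
      intro j hj
      apply ht.1
      rw [Finset.mem_Icc]
      omega
    have hpi : ∀ j, pinv (fun q => q : ℕ → ℕ) j = j := fun j => pinv_w hseg j
    refine ⟨fun q => q, ∅, hseg, ?_, ?_, ?_⟩
    · intro j
      rcases eq_or_ne j 1 with rfl | hj
      · rw [hzero.1, phiA, Finset.card_eq_zero, Finset.filter_eq_empty_iff]
        intro q hq
        rw [Finset.mem_Icc] at hq
        rw [hpi]
        rintro ⟨hc, -, -⟩
        omega
      · rw [(hout j hj).1, phiA_out hseg (by rw [Finset.mem_Icc]; omega)]
    · intro j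
      rcases eq_or_ne j 1 with rfl | hj
      · rw [hzero.2.1, phiB, if_neg]
        rintro ⟨-, -, h3, -⟩
        rw [hpi] at h3
        omega
      · rw [(hout j hj).2.1, phiB_out (by rw [Finset.mem_Icc]; omega)]
    · intro j
      rcases eq_or_ne j 1 with rfl | hj
      · rw [hzero.2.2, phiG, if_neg]
        rintro ⟨-, h2, h3, -⟩
        rw [hpi] at h3
        omega
      · rw [(hout j hj).2.2, phiG_out (by rw [Finset.mem_Icc]; omega)]
  | succ n hn ih =>
    intro t1 t2 t3 ht
    -- restricted datum
    set s1 : ℕ → ℕ := fun j => if 1 ≤ j ∧ j ≤ n then t1 j else 0 with hs1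
    set s2 : ℕ → ℕ := fun j => if 1 ≤ j ∧ j ≤ n then t2 j else 0 with hs2
    set s3 : ℕ → ℕ := fun j => if 1 ≤ j ∧ j ≤ n then t3 j else 0 with hs3
    have hts : ∀ j, 1 ≤ j → j ≤ n → s1 j = t1 j ∧ s2 j = t2 j ∧ s3 j = t3 j := by
      intro j h1 h2
      exact ⟨if_pos ⟨h1, h2⟩, if_pos ⟨h1, h2⟩, if_pos ⟨h1, h2⟩⟩
    have hdat' : IsDatum n s1 s2 s3 := by
      refine ⟨?_, ?_, ?_⟩
      · intro i hi
        rw [Finset.mem_Icc] at hi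
        exact ⟨if_neg (by omega : ¬(1 ≤ i ∧ i ≤ n)), if_neg (by omega : ¬(1 ≤ i ∧ i ≤ n)),
          if_neg (by omega : ¬(1 ≤ i ∧ i ≤ n))⟩
      · intro i hi
        rw [Finset.mem_Icc] at hi
        have := ht.2.1 i (by rw [Finset.mem_Icc]; omega)
        obtain ⟨e1, e2, e3⟩ := hts i hi.1 hi.2
        rw [e2, e3]
        exact this
      · intro i hi
        rw [Finset.mem_Icc] at hi
        have hc := ht.2.2 i (by rw [Finset.mem_Icc]; omega)
        obtain ⟨e1, e2, e3⟩ := hts i hi.1 hi.2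
        rw [e1]
        calc (t1 i : ℤ) + 1 ≤ ∑ j ∈ Finset.Icc 1 i, (1 - (t2 j : ℤ) - (t3 j : ℤ)) := hc
          _ = ∑ j ∈ Finset.Icc 1 i, (1 - (s2 j : ℤ) - (s3 j : ℤ)) := by
            apply Finset.sum_congr rfl
            intro j hj
            rw [Finset.mem_Icc] at hj
            obtain ⟨-, f2, f3⟩ := hts j hj.1 (by omega)
            rw [f2, f3]
    obtain ⟨w', D', h', hA', hB', hG'⟩ := ih s1 s2 s3 hdat'
    set a := t1 (n + 1) with ha
    set b := t2 (n + 1) with hb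
    set g := t3 (n + 1) with hg
    have hbg : b ≤ 1 ∧ g ≤ 1 := ht.2.1 (n + 1) (by rw [Finset.mem_Icc]; omega)
    -- the counting bound
    have hsum2 : (∑ j ∈ Finset.Icc 1 n, (t2 j + t3 j)) + D'.card + 1 = n := by
      have := sum_bg_top h' (by omega)
      have he : ∑ j ∈ Finset.Icc 1 n, (phiB n w' D' j + phiG n w' D' j) =
          ∑ j ∈ Finset.Icc 1 n, (t2 j + t3 j) := by
        apply Finset.sum_congr rfl
        intro j hj
        rw [Finset.mem_Icc] at hj
        obtain ⟨-, f2, f3⟩ := hts j hj.1 hj.2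
        rw [hB' j, hG' j, f2, f3]
      rwa [he] at this
    have hcon := ht.2.2 (n + 1) (by rw [Finset.mem_Icc]; omega)
    rw [Finset.sum_Icc_succ_top (by omega)] at hcon
    have hcast : ∑ j ∈ Finset.Icc 1 n, ((1:ℤ) - (t2 j : ℤ) - (t3 j : ℤ)) =
        (n : ℤ) - (∑ j ∈ Finset.Icc 1 n, (t2 j + t3 j) : ℕ) := by
      push_cast
      rw [Finset.sum_sub_distrib, Finset.sum_sub_distrib, Finset.sum_add_distrib]
      simp [Nat.card_Icc]
      ring
    rw [hcast] at hcon
    have hval : a + b + g ≤ D'.card + 1 := by omega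
    have hD'sub : D' ⊆ Finset.Ico 1 (n + 1 - 1) := by simpa using h'.2.2
    obtain ⟨p, hp, hslot, hbp, hgp, hcnt⟩ :=
      pos_exists (n := n + 1) hD'sub (by omega) hbg.1 hbg.2 hval
    have h'' : IsSegPerm (n + 1 - 1) w' D' := by simpa using h'
    have hIns := ins_isSegPerm (n := n + 1) (p := p) (b := b) (g := g) h''
      (by omega) hp.1 hp.2
    refine ⟨insW (n + 1) p w', insD (n + 1) p b g D', hIns, ?_, ?_, ?_⟩
    · intro j
      rcases Nat.lt_trichotomy j (n + 1) with hj | hj | hj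
      · rcases Nat.eq_zero_or_pos j with rfl | hj1
        · rw [phiA_out hIns (by rw [Finset.mem_Icc]; omega),
            (ht.1 0 (by rw [Finset.mem_Icc]; omega)).1]
        · have e1 := phiA_rem hIns (show 2 ≤ n + 1 by omega) (j := j) hj1 (by omega)
          rw [ins_remW (b := b) (g := g) h'' (by omega) hp.1 hp.2,
            ins_remD (b := b) (g := g) h'' (by omega) hp.1 hp.2 hslot] at e1
          simp only [Nat.add_sub_cancel] at e1
          rw [← e1, hA' j, (hts j hj1 (by omega)).1]
      · rw [hj]
        exact ins_phiA h'' (by omega) hp.1 hp.2 hbg.1 hbp hbg.2 hgp hslot hcnt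
      · rw [phiA_out hIns (by rw [Finset.mem_Icc]; omega),
          (ht.1 j (by rw [Finset.mem_Icc]; omega)).1]
    · intro j
      rcases Nat.lt_trichotomy j (n + 1) with hj | hj | hj
      · rcases Nat.eq_zero_or_pos j with rfl | hj1
        · rw [phiB_out (by rw [Finset.mem_Icc]; omega),
            (ht.1 0 (by rw [Finset.mem_Icc]; omega)).2.1]
        · have e1 := phiB_rem hIns (show 2 ≤ n + 1 by omega) (j := j) hj1 (by omega)
          rw [ins_remW (b := b) (g := g) h'' (by omega) hp.1 hp.2,
            ins_remD (b := b) (g := g) h'' (by omega) hp.1 hp.2 hslot] at e1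
          simp only [Nat.add_sub_cancel] at e1
          rw [← e1, hB' j, (hts j hj1 (by omega)).2.1]
      · rw [hj]
        exact ins_phiB h'' (by omega) hp.1 hp.2 hbg.1 hbp
      · rw [phiB_out (by rw [Finset.mem_Icc]; omega),
          (ht.1 j (by rw [Finset.mem_Icc]; omega)).2.1]
    · intro j
      rcases Nat.lt_trichotomy j (n + 1) with hj | hj | hj
      · rcases Nat.eq_zero_or_pos j with rfl | hj1
        · rw [phiG_out (by rw [Finset.mem_Icc]; omega),
            (ht.1 0 (by rw [Finset.mem_Icc]; omega)).2.2]
        · have e1 := phiG_rem hIns (show 2 ≤ n + 1 by omega) (j := j) hj1 (by omega)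
          rw [ins_remW (b := b) (g := g) h'' (by omega) hp.1 hp.2,
            ins_remD (b := b) (g := g) h'' (by omega) hp.1 hp.2 hslot] at e1
          simp only [Nat.add_sub_cancel] at e1
          rw [← e1, hG' j, (hts j hj1 (by omega)).2.2]
      · rw [hj]
        exact ins_phiG h'' (by omega) hp.1 hp.2 hbg.2 hgp
      · rw [phiG_out (by rw [Finset.mem_Icc]; omega),
          (ht.1 j (by rw [Finset.mem_Icc]; omega)).2.2]

end SB


/-- There is a bijection `ψ` from the (1,2)-basis data of length `n` onto the segmented
permutations of length `n` such that `deg_θ` corresponds to the number of ascents,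
`deg_ξ` to the number of descents, and `deg_x` to `sminv`. -/
theorem exists_bijection_datum_segPerm (n : ℕ) (hn : 1 ≤ n) :
    ∃ ψ : {t : (ℕ → ℕ) × (ℕ → ℕ) × (ℕ → ℕ) // IsDatum n t.1 t.2.1 t.2.2} ≃
          {s : (ℕ → ℕ) × Finset ℕ // IsSegPerm n s.1 s.2},
      ∀ t, (∑ i ∈ Finset.Icc 1 n, t.1.2.1 i) = (ascFin n (ψ t).1.1 (ψ t).1.2).card ∧
           (∑ i ∈ Finset.Icc 1 n, t.1.2.2 i) = (descFin n (ψ t).1.1 (ψ t).1.2).card ∧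
           (∑ i ∈ Finset.Icc 1 n, t.1.1 i) = sminv n (ψ t).1.1 (ψ t).1.2 := by
  classical
  set F : {s : (ℕ → ℕ) × Finset ℕ // IsSegPerm n s.1 s.2} →
      {t : (ℕ → ℕ) × (ℕ → ℕ) × (ℕ → ℕ) // IsDatum n t.1 t.2.1 t.2.2} :=
    fun s => ⟨(SB.phiA n s.1.1 s.1.2, SB.phiB n s.1.1 s.1.2, SB.phiG n s.1.1 s.1.2),
      SB.phi_isDatum s.2⟩ with hF
  have hbij : Function.Bijective F := by
    constructor
    · rintro ⟨⟨w1, D1⟩, h1⟩ ⟨⟨w2, D2⟩, h2⟩ he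
      simp only [hF, Subtype.mk.injEq, Prod.mk.injEq] at he
      obtain ⟨eA, eB, eG⟩ := he
      have hres := SB.phi_inj n hn w1 D1 w2 D2 h1 h2 (fun j => congrFun eA j)
        (fun j => congrFun eB j) (fun j => congrFun eG j)
      simp only [Subtype.mk.injEq, Prod.mk.injEq]
      exact ⟨hres.1, hres.2⟩
    · rintro ⟨⟨t1, t2, t3⟩, ht⟩
      obtain ⟨w, D, hs, hA, hB, hG⟩ := SB.phi_surj n hn t1 t2 t3 ht
      refine ⟨⟨(w, D), hs⟩, ?_⟩
      simp only [hF, Subtype.mk.injEq, Prod.mk.injEq]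
      exact ⟨funext hA, funext hB, funext hG⟩
  refine ⟨(Equiv.ofBijective F hbij).symm, ?_⟩
  intro t
  set s := (Equiv.ofBijective F hbij).symm t with hsdef
  have key : F s = t := (Equiv.ofBijective F hbij).apply_symm_apply t
  have e1 : t.1.1 = SB.phiA n s.1.1 s.1.2 := by rw [← key]
  have e2 : t.1.2.1 = SB.phiB n s.1.1 s.1.2 := by rw [← key]
  have e3 : t.1.2.2 = SB.phiG n s.1.1 s.1.2 := by rw [← key]
  have hseg : IsSegPerm n s.1.1 s.1.2 := s.2
  refine ⟨?_, ?_, ?_⟩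
  · rw [show (∑ i ∈ Finset.Icc 1 n, t.1.2.1 i) =
      ∑ i ∈ Finset.Icc 1 n, SB.phiB n s.1.1 s.1.2 i from by rw [← e2]]
    exact SB.sum_phiB hseg
  · rw [show (∑ i ∈ Finset.Icc 1 n, t.1.2.2 i) =
      ∑ i ∈ Finset.Icc 1 n, SB.phiG n s.1.1 s.1.2 i from by rw [← e3]]
    exact SB.sum_phiG hseg
  · rw [show (∑ i ∈ Finset.Icc 1 n, t.1.1 i) =
      ∑ i ∈ Finset.Icc 1 n, SB.phiA n s.1.1 s.1.2 i from by rw [← e1]]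
    exact SB.sum_phiA hseg
end
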